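/- Let ℛ and 𝒮 be linear growing TRSs over 𝓕 and let 𝒟'(ℛ,𝒮) be the powerset-pair automaton built from 𝒞'_{RS_{𝒮°}}(ℛ). For every s ∈ 𝒯(𝓕): s ∈ L(𝒟'(ℛ,𝒮)) if and only if s is not root-stable with respect to 𝒮 and s[(s|_p)°]_p ∈ (→_ℛ*)[RS_{𝒮°}] for every redex position p of s. -/

import Mathlib

set_option maxHeartbeats 1000000

/-! ## Terms over a signature -/

/-- Terms over a signature given by a type `F` of function symbols together with
an arity function `ar`; variables are natural numbers. -/
inductive Term (F : Type) (ar : F → ℕ) : Type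
  | var : ℕ → Term F ar
  | app : (f : F) → (Fin (ar f) → Term F ar) → Term F ar

namespace Term

variable {F : Type} {ar : F → ℕ}

/-- The (finite) set of variables of a term. -/
def vars : Term F ar → Finset ℕ
  | var n => {n}
  | app _ ts => Finset.univ.biUnion fun i => (ts i).vars

/-- A term is ground if it contains no variables. -/
def Ground (t : Term F ar) : Prop := t.vars = ∅

/-- The number of occurrences of the variable `n` in a term. -/
def count (n : ℕ) : Term F ar → ℕ
  | var m => if m = n then 1 else 0
  | app _ ts => ∑ i, (ts i).count n

/-- A term is linear if no variable occurs twice in it. -/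
def Linear (t : Term F ar) : Prop := ∀ n, t.count n ≤ 1

/-- Applying a substitution to a term. -/
def subst (σ : ℕ → Term F ar) : Term F ar → Term F ar
  | var n => σ n
  | app f ts => app f fun i => (ts i).subst σ

/-- The subterm at a position (a list of argument indices), if the position is valid. -/
def subtermAt : Term F ar → List ℕ → Option (Term F ar)
  | t, [] => some t
  | var _, _ :: _ => none
  | app f ts, i :: p => if h : i < ar f then (ts ⟨i, h⟩).subtermAt p else none

/-- Replacing the subterm at a position, if the position is valid. -/
def replaceAt : Term F ar → List ℕ → Term F ar → Option (Term F ar)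
  | _, [], u => some u
  | var _, _ :: _, _ => none
  | app f ts, i :: p, u =>
      if h : i < ar f then
        ((ts ⟨i, h⟩).replaceAt p u).map fun s => app f (Function.update ts ⟨i, h⟩ s)
      else none

/-- `s.IsSubtermOf t` : `s` is a subterm of `t`. -/
def IsSubtermOf (s t : Term F ar) : Prop := ∃ p, t.subtermAt p = some s

/-- Relabelling of function symbols along an arity-preserving map of signatures. -/
def relabel {G : Type} {arG : G → ℕ} (φ : F → G) (h : ∀ f, arG (φ f) = ar f) :
    Term F ar → Term G arG
  | var n => var n
  | app f ts => app (φ f) fun i => (ts (Fin.cast (h f) i)).relabel φ h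

end Term

/-! ## Rewriting -/

/-- One-step rewriting with a set of rewrite rules: there are a position `p` of `s`,
a rule `(l, r)` and a substitution `σ` with `s|_p = lσ` and `t = s[rσ]_p`. -/
def Rewrites {F : Type} {ar : F → ℕ} (R : Set (Term F ar × Term F ar))
    (s t : Term F ar) : Prop :=
  ∃ (p : List ℕ) (l r : Term F ar) (σ : ℕ → Term F ar),
    (l, r) ∈ R ∧ s.subtermAt p = some (l.subst σ) ∧ s.replaceAt p (r.subst σ) = some t

/-- Many-step rewriting (reflexive–transitive closure). -/
abbrev RewritesStar {F : Type} {ar : F → ℕ} (R : Set (Term F ar × Term F ar)) :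
    Term F ar → Term F ar → Prop :=
  Relation.ReflTransGen (Rewrites R)

/-- A term rewriting system: a finite set of rules whose left-hand sides are not variables. -/
structure TRS (F : Type) (ar : F → ℕ) where
  rules : Set (Term F ar × Term F ar)
  finite : rules.Finite
  lhs_not_var : ∀ lr ∈ rules, ∀ n, lr.1 ≠ Term.var n

namespace TRS

variable {F : Type} {ar : F → ℕ}

def LeftLinear (R : TRS F ar) : Prop := ∀ lr ∈ R.rules, lr.1.Linear

def RightLinear (R : TRS F ar) : Prop := ∀ lr ∈ R.rules, lr.2.Linear

/-- A TRS is linear if all left- and right-hand sides are linear terms. -/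
def IsLinear (R : TRS F ar) : Prop := R.LeftLinear ∧ R.RightLinear

/-- A TRS is growing if every variable occurring both in the left- and the right-hand
side of a rule occurs at depth 1 in the left-hand side. -/
def Growing (R : TRS F ar) : Prop :=
  ∀ lr ∈ R.rules, ∀ n ∈ lr.1.vars, n ∈ lr.2.vars →
    ∀ (f : F) (ts : Fin (ar f) → Term F ar), lr.1 = Term.app f ts →
      ∀ i, n ∈ (ts i).vars → ts i = Term.var n

/-- A redex is an instance of a left-hand side. -/
def IsRedex (R : TRS F ar) (s : Term F ar) : Prop :=
  ∃ lr ∈ R.rules, ∃ σ : ℕ → Term F ar, s = lr.1.subst σ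

/-- `p` is a redex position of `s`. -/
def RedexPos (R : TRS F ar) (s : Term F ar) (p : List ℕ) : Prop :=
  ∃ u, s.subtermAt p = some u ∧ R.IsRedex u

def Reducible (R : TRS F ar) (s : Term F ar) : Prop := ∃ p, R.RedexPos s p

/-- A term is root-stable if it cannot be rewritten to a redex. -/
def RootStable (R : TRS F ar) (s : Term F ar) : Prop :=
  ¬ ∃ t, RewritesStar R.rules s t ∧ R.IsRedex t

/-- Ground normal forms. -/
def NFset (R : TRS F ar) : Set (Term F ar) := { t | t.Ground ∧ ¬ R.Reducible t }

/-- Ground redexes. -/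
def RedexSet (R : TRS F ar) : Set (Term F ar) := { t | t.Ground ∧ R.IsRedex t }

/-- Root-stable ground terms. -/
def RSset (R : TRS F ar) : Set (Term F ar) := { t | t.Ground ∧ R.RootStable t }

/-- Relabelling a TRS along an arity-preserving map of signatures. -/
def relabel {G : Type} {arG : G → ℕ} (R : TRS F ar) (φ : F → G)
    (h : ∀ f, arG (φ f) = ar f) : TRS G arG where
  rules := (fun lr => (lr.1.relabel φ h, lr.2.relabel φ h)) '' R.rules
  finite := R.finite.image _
  lhs_not_var := by
    rintro lr ⟨lr0, h0, rfl⟩ n hn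
    dsimp only at hn
    cases h1 : lr0.1 with
    | var m => exact absurd h1 (R.lhs_not_var lr0 h0 m)
    | app f ts =>
        rw [h1] at hn
        simp only [Term.relabel] at hn
        exact nomatch hn

end TRS

/-! ## Tree automata -/

/-- A transition rule `f(q₁,…,qₙ) → q` of a bottom-up tree automaton. -/
abbrev TARule (F : Type) (ar : F → ℕ) (Q : Type) : Type :=
  (f : F) × ((Fin (ar f) → Q) × Q)

/-- A (finite bottom-up) tree automaton without ε-transitions. -/
structure TreeAutomaton (F : Type) (ar : F → ℕ) (Q : Type) where
  trans : Set (TARule F ar Q)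
  final : Set Q

/-- `Reaches Δ t q` : the ground term `t` rewrites to the state `q` using the
transition rules `Δ`. -/
inductive Reaches {F : Type} {ar : F → ℕ} {Q : Type} (Δ : Set (TARule F ar Q)) :
    Term F ar → Q → Prop
  | app {f : F} {ts : Fin (ar f) → Term F ar} {qs : Fin (ar f) → Q} {q : Q} :
      (∀ i, Reaches Δ (ts i) (qs i)) → (⟨f, qs, q⟩ : TARule F ar Q) ∈ Δ →
      Reaches Δ (Term.app f ts) q

/-- `ReachesT Δ θ t q` : the term `t`, whose variables are interpreted as the states
given by `θ`, rewrites to the state `q` using the transition rules `Δ`. -/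
inductive ReachesT {F : Type} {ar : F → ℕ} {Q : Type} (Δ : Set (TARule F ar Q))
    (θ : ℕ → Q) : Term F ar → Q → Prop
  | var (n : ℕ) : ReachesT Δ θ (Term.var n) (θ n)
  | app {f : F} {ts : Fin (ar f) → Term F ar} {qs : Fin (ar f) → Q} {q : Q} :
      (∀ i, ReachesT Δ θ (ts i) (qs i)) → (⟨f, qs, q⟩ : TARule F ar Q) ∈ Δ →
      ReachesT Δ θ (Term.app f ts) q

/-- The language of a tree automaton: all ground terms reaching a final state. -/
def Lang {F : Type} {ar : F → ℕ} {Q : Type} (A : TreeAutomaton F ar Q) :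
    Set (Term F ar) :=
  { t | t.Ground ∧ ∃ q ∈ A.final, Reaches A.trans t q }

/-- A set of ground terms is recognizable if it is the language of some finite
tree automaton. -/
def Recognizable {F : Type} {ar : F → ℕ} (T : Set (Term F ar)) : Prop :=
  ∃ (Q : Type) (_ : Fintype Q) (A : TreeAutomaton F ar Q), T = Lang A

/-- The set of states occurring in a set of transition rules. -/
def statesOf {F : Type} {ar : F → ℕ} {Q : Type} (Γ : Set (TARule F ar Q)) : Set Q :=
  { q | ∃ ρ ∈ Γ, ρ.2.2 = q ∨ ∃ i, ρ.2.1 i = q }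

/-! ## The automaton `ℬ(ℛ)` -/

/-- The canonical representative of the state `⟨t⟩` of `ℬ(ℛ)`: all variables are
identified with the single state `⟨x⟩`, represented by `var 0`. -/
def stPattern {F : Type} {ar : F → ℕ} : Term F ar → Term F ar
  | Term.var _ => Term.var 0
  | Term.app f ts => Term.app f ts

/-- `S_ℛ`: the set of all subterms of arguments of left-hand sides of `ℛ`. -/
def SR {F : Type} {ar : F → ℕ} (R : TRS F ar) : Set (Term F ar) :=
  { s | ∃ lr ∈ R.rules, ∃ (f : F) (ts : Fin (ar f) → Term F ar),
        lr.1 = Term.app f ts ∧ ∃ i, s.IsSubtermOf (ts i) }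

/-- The representatives of the states of `ℬ(ℛ)`: the patterns of terms of `S_ℛ`,
together with `⟨x⟩`. -/
def BStateSet {F : Type} {ar : F → ℕ} (R : TRS F ar) : Set (Term F ar) :=
  stPattern '' SR R ∪ {Term.var 0}

/-- The matching rules of `ℬ(ℛ)` (with states encoded by `enc`):
`f(⟨t₁⟩,…,⟨tₙ⟩) → ⟨t⟩` for every `t = f(t₁,…,tₙ) ∈ S_ℛ`. -/
def BMatch {F : Type} {ar : F → ℕ} {Q : Type} (R : TRS F ar) (enc : Term F ar → Q) :
    Set (TARule F ar Q) :=
  { ρ | ∃ (f : F) (ts : Fin (ar f) → Term F ar), Term.app f ts ∈ SR R ∧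
        ρ = ⟨f, fun i => enc (stPattern (ts i)), enc (Term.app f ts)⟩ }

/-- The propagation rules `f(⟨x⟩,…,⟨x⟩) → ⟨x⟩` for every function symbol `f`. -/
def BProp {F : Type} {ar : F → ℕ} {Q : Type} (enc : Term F ar → Q) :
    Set (TARule F ar Q) :=
  { ρ | ∃ f : F, ρ = ⟨f, fun _ => enc (Term.var 0), enc (Term.var 0)⟩ }

/-- The transition rules of the automaton `ℬ(ℛ)`. -/
def BTrans {F : Type} {ar : F → ℕ} {Q : Type} (R : TRS F ar) (enc : Term F ar → Q) :
    Set (TARule F ar Q) :=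
  BMatch R enc ∪ BProp enc

/-- `Σ(t)`: the set of ground instances of the term `t`. -/
def GInst {F : Type} {ar : F → ℕ} (t : Term F ar) : Set (Term F ar) :=
  { s | s.Ground ∧ ∃ σ, s = t.subst σ }

/-! ## Saturation -/

/-- The state `qᵢ` associated to the argument `lᵢ` of a left-hand side in the
saturation rule: `lᵢθ` if `lᵢ` is a variable occurring in `r` (whose variable set
is `rv`), and `⟨lᵢ⟩` otherwise. -/
def satArg {F : Type} {ar : F → ℕ} {Q : Type} (enc : Term F ar → Q) (θ : ℕ → Q)
    (rv : Finset ℕ) : Term F ar → Q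
  | Term.var n => if n ∈ rv then θ n else enc (Term.var 0)
  | Term.app f ts => enc (Term.app f ts)

/-- One step of the saturation process: add all transition rules `f(q₁,…,qₙ) → q`
obtained from a rewrite rule `f(l₁,…,lₙ) → r` and a state substitution `θ`
(with values among the states `Qc` of the automaton) such that `rθ →_Γ* q`. -/
def satStep {F : Type} {ar : F → ℕ} {Q : Type} (R : TRS F ar) (enc : Term F ar → Q)
    (Qc : Set Q) (Γ : Set (TARule F ar Q)) : Set (TARule F ar Q) :=
  Γ ∪ { ρ | ∃ (f : F) (ls : Fin (ar f) → Term F ar) (r : Term F ar) (θ : ℕ → Q) (q : Q),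
        (Term.app f ls, r) ∈ R.rules ∧ (∀ n ∈ r.vars, θ n ∈ Qc) ∧ ReachesT Γ θ r q ∧
        ρ = ⟨f, fun i => satArg enc θ r.vars (ls i), q⟩ }

/-- The saturated set of transition rules: the closure of `Γ0` under the saturation
inference rule. -/
def satGamma {F : Type} {ar : F → ℕ} {Q : Type} (R : TRS F ar) (enc : Term F ar → Q)
    (Qc : Set Q) (Γ0 : Set (TARule F ar Q)) : Set (TARule F ar Q) :=
  ⋃ n, (satStep R enc Qc)^[n] Γ0

/-! ## The automaton `𝒞_T(ℛ)` and its extension `𝒞'_T(ℛ)` -/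

/-- The data of the construction of the automaton `𝒞_T(ℛ)`: an automaton `𝒜_T`
recognizing `T` with all states accessible and state set `QA`, together with an
encoding `enc` of the states `⟨t⟩` of `ℬ(ℛ)` into the common state type `Q`, such
that every state common to `𝒜_T` and `ℬ(ℛ)` accepts the same set of terms in both
automata. -/
structure CSetup {G : Type} [Fintype G] {arG : G → ℕ} (Q : Type) [Fintype Q]
    (Rg : TRS G arG) (T : Set (Term G arG)) where
  enc : Term G arG → Q
  A : TreeAutomaton G arG Q
  QA : Set Q
  henc : Set.InjOn enc (BStateSet Rg)
  hAstates : ∀ ρ ∈ A.trans, ρ.2.2 ∈ QA ∧ ∀ i, ρ.2.1 i ∈ QA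
  hfinal : A.final ⊆ QA
  hacc : ∀ q ∈ QA, ∃ s : Term G arG, s.Ground ∧ Reaches A.trans s q
  hground : ∃ s : Term G arG, s.Ground
  hshared : ∀ q ∈ QA ∩ enc '' BStateSet Rg, ∀ s : Term G arG,
      Reaches A.trans s q ↔ Reaches (BTrans Rg enc) s q
  hT : T = Lang A

namespace CSetup

variable {G : Type} [Fintype G] {arG : G → ℕ} {Q : Type} [Fintype Q]
  {Rg : TRS G arG} {T : Set (Term G arG)}

/-- The set of states of the automaton `𝒞_T(ℛ)`. -/
def Qstates (C : CSetup Q Rg T) : Set Q := C.QA ∪ C.enc '' BStateSet Rg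

/-- The transition rules of `𝒞_T(ℛ)` before saturation: the union of `𝒜_T` and `ℬ(ℛ)`. -/
def Γ0 (C : CSetup Q Rg T) : Set (TARule G arG Q) := C.A.trans ∪ BTrans Rg C.enc

/-- The transition rules of `𝒞_T(ℛ)` after saturation. -/
def Γsat (C : CSetup Q Rg T) : Set (TARule G arG Q) :=
  satGamma Rg C.enc C.Qstates C.Γ0

end CSetup

/-- The redex rules `f(⟪l₁⟫,…,⟪lₙ⟫) → q_r` for every left-hand side `f(l₁,…,lₙ)`. -/
def RedexRules {F : Type} {ar : F → ℕ} {Q : Type} (R : TRS F ar)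
    (enc2 : Term F ar → Q) (qr : Q) : Set (TARule F ar Q) :=
  { ρ | ∃ (f : F) (ls : Fin (ar f) → Term F ar) (r : Term F ar),
        (Term.app f ls, r) ∈ R.rules ∧
        ρ = ⟨f, fun i => enc2 (stPattern (ls i)), qr⟩ }

/-- The rules `f(⟨x⟩,…,q_r,…,⟨x⟩) → q_r`. -/
def QrProp {F : Type} {ar : F → ℕ} {Q : Type} (enc : Term F ar → Q) (qr : Q) :
    Set (TARule F ar Q) :=
  { ρ | ∃ (f : F) (j : Fin (ar f)),
        ρ = ⟨f, fun i => if i = j then qr else enc (Term.var 0), qr⟩ }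

/-- The data of the construction of the automaton `𝒞'_T(ℛ)`: `𝒞_T(ℛ)` extended with
a fresh copy `⟪t⟫` (encoded by `enc2`, with `⟪x⟫ = ⟨x⟩`) of the states of `ℬ(ℛ)` and
a fresh state `q_r`. -/
structure CpSetup {G : Type} [Fintype G] {arG : G → ℕ} (Q : Type) [Fintype Q]
    (Rg : TRS G arG) (T : Set (Term G arG)) extends CSetup Q Rg T where
  enc2 : Term G arG → Q
  qr : Q
  henc2 : Set.InjOn enc2 (BStateSet Rg)
  hx : enc2 (Term.var 0) = enc (Term.var 0)
  hfresh : (enc2 '' (BStateSet Rg \ {Term.var 0}) ∪ {qr}) ∩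
              (QA ∪ enc '' BStateSet Rg) = ∅
  hqr : qr ∉ enc2 '' (BStateSet Rg \ {Term.var 0})

namespace CpSetup

variable {G : Type} [Fintype G] {arG : G → ℕ} {Q : Type} [Fintype Q]
  {Rg : TRS G arG} {T : Set (Term G arG)}

/-- The transition rules `Γ'` of the automaton `𝒞'_T(ℛ)`. -/
def Γ' (C : CpSetup Q Rg T) : Set (TARule G arG Q) :=
  C.toCSetup.Γsat ∪ BMatch Rg C.enc2 ∪ RedexRules Rg C.enc2 C.qr ∪ QrProp C.enc C.qr

end CpSetup

/-! ## The signature `𝓖 = 𝓕 ∪ {•}` -/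

/-- The arity function of the extended signature `𝓕 ∪ {•}` (with `•` the fresh
constant `none`). -/
def arB {F : Type} (ar : F → ℕ) : Option F → ℕ
  | none => 0
  | some f => ar f

/-- The term `•`. -/
def bulletTm {F : Type} {ar : F → ℕ} : Term (Option F) (arB ar) :=
  Term.app none Fin.elim0

/-- The embedding of `𝒯(𝓕)`-terms into terms over `𝓕 ∪ {•}`. -/
def liftB {F : Type} {ar : F → ℕ} : Term F ar → Term (Option F) (arB ar) :=
  Term.relabel some (fun _ => rfl)

/-- A TRS over `𝓕` viewed as a TRS over `𝓕 ∪ {•}`. -/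
def TRS.liftB {F : Type} {ar : F → ℕ} (R : TRS F ar) : TRS (Option F) (arB ar) :=
  R.relabel some (fun _ => rfl)

/-- The TRS `ℛ• = ℛ ∪ {• → •}` over the signature `𝓕 ∪ {•}`. -/
def TRS.bullet {F : Type} {ar : F → ℕ} (R : TRS F ar) : TRS (Option F) (arB ar) where
  rules := R.liftB.rules ∪ {(bulletTm, bulletTm)}
  finite := R.liftB.finite.union (Set.finite_singleton _)
  lhs_not_var := by
    rintro lr (h | h) n hn
    · exact R.liftB.lhs_not_var lr h n hn
    · rw [Set.mem_singleton_iff] at h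
      rw [h] at hn
      simp [bulletTm] at hn

/-! ## The automaton `𝒟(ℛ)` -/

/-- For a symbol `g` and sets of states `Ss` for the arguments, the set
`g(S₁,…,Sₙ)↓` of states reachable from `g` applied to states chosen from the `Ssᵢ`. -/
def oneStep {G : Type} {arG : G → ℕ} {Q : Type} (Γ : Set (TARule G arG Q)) (g : G)
    (Ss : Fin (arG g) → Set Q) : Set Q :=
  { q | ∃ qs : Fin (arG g) → Q, (∀ i, qs i ∈ Ss i) ∧ (⟨g, qs, q⟩ : TARule G arG Q) ∈ Γ }

/-- `t↓` for a ground term `t`: the set of states reachable from `t`. -/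
def dn {G : Type} {arG : G → ℕ} {Q : Type} (Γ : Set (TARule G arG Q))
    (t : Term G arG) : Set Q :=
  { q | Reaches Γ t q }

/-- There is a rewrite rule with left-hand side `g(l₁,…,lₙ)` such that
`⟪lᵢ⟫ ∈ Ssᵢ` for all `i`. -/
def LhsMatch {G : Type} {arG : G → ℕ} {Q : Type} (Rg : TRS G arG)
    (enc2 : Term G arG → Q) (g : G) (Ss : Fin (arG g) → Set Q) : Prop :=
  ∃ (ls : Fin (arG g) → Term G arG) (r : Term G arG),
    (Term.app g ls, r) ∈ Rg.rules ∧ ∀ i, enc2 (stPattern (ls i)) ∈ Ss i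

/-- The transition rules of the automaton `𝒟(ℛ)` over `𝓕`, built from the transition
rules `Γ'` of `𝒞'_{NF}(ℛ)` over `𝓕 ∪ {•}`. -/
def DTrans {F : Type} {ar : F → ℕ} {Q : Type} (Rb : TRS (Option F) (arB ar))
    (Γ' : Set (TARule (Option F) (arB ar) Q))
    (enc enc2 : Term (Option F) (arB ar) → Q) :
    Set (TARule F ar (Set Q × Set Q)) :=
  { ρ | ∃ (f : F) (SP : Fin (ar f) → Set Q × Set Q) (P1 P2 : Set Q),
      P1 ⊆ (⋃ i : Fin (ar f), oneStep Γ' (some f)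
              (fun (j : Fin (ar f)) => if j = i then (SP j).2 else (SP j).1)) ∧
      (∀ (i : Fin (ar f)), ∀ q ∈ (SP i).2,
        (P1 ∩ oneStep Γ' (some f) (fun (j : Fin (ar f)) => if j = i then {q} else (SP j).1)).Nonempty) ∧
      ((LhsMatch Rb enc2 (some f) (fun i => (SP i).1) ∧ P2 = {enc (Term.var 0)}) ∨
       (¬ LhsMatch Rb enc2 (some f) (fun i => (SP i).1) ∧ P2 = (∅ : Set Q))) ∧
      ρ = ⟨f, SP, (oneStep Γ' (some f) (fun i => (SP i).1), P1 ∪ P2)⟩ }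

/-- The automaton `𝒟(ℛ)`: final states are the pairs `[S,P]` with `q_r ∈ S` and
`P ⊆ Q_f`. -/
def DAutomaton {F : Type} {ar : F → ℕ} {Q : Type} (Rb : TRS (Option F) (arB ar))
    (Γ' : Set (TARule (Option F) (arB ar) Q))
    (enc enc2 : Term (Option F) (arB ar) → Q) (qr : Q) (Qf : Set Q) :
    TreeAutomaton F ar (Set Q × Set Q) where
  trans := DTrans Rb Γ' enc enc2
  final := { SP | qr ∈ SP.1 ∧ SP.2 ⊆ Qf }

/-! ## Growing approximations -/

/-- `VarRepl t t'` : `t'` is obtained from `t` by replacing occurrences of variables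
by (possibly other) variables. -/
inductive VarRepl {F : Type} {ar : F → ℕ} : Term F ar → Term F ar → Prop
  | var (n m : ℕ) : VarRepl (Term.var n) (Term.var m)
  | app (f : F) (ts ts' : Fin (ar f) → Term F ar) :
      (∀ i, VarRepl (ts i) (ts' i)) → VarRepl (Term.app f ts) (Term.app f ts')

/-- `Rg` is a growing approximation of `R`: a right-linear growing TRS obtained from
`R` by replacing, in each right-hand side, occurrences of variables by variables not
occurring in the corresponding left-hand side. -/
def IsGrowingApprox {F : Type} {ar : F → ℕ} (R Rg : TRS F ar) : Prop :=
  Rg.RightLinear ∧ Rg.Growing ∧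
  (∀ lr ∈ Rg.rules, ∃ lr' ∈ R.rules, lr.1 = lr'.1 ∧ VarRepl lr'.2 lr.2 ∧
      ∀ n ∈ lr.2.vars, n ∉ lr.1.vars) ∧
  (∀ lr ∈ R.rules, ∃ lr' ∈ Rg.rules, lr.1 = lr'.1 ∧ VarRepl lr.2 lr'.2 ∧
      ∀ n ∈ lr'.2.vars, n ∉ lr'.1.vars)

/-! ## The signature `𝓖 = 𝓕 ∪ {f° : f ∈ 𝓕}` -/

/-- The arity function of the signature `𝓕 ∪ {f° : f ∈ 𝓕}` (`inl f` is `f`,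
`inr f` is `f°`). -/
def arC {F : Type} (ar : F → ℕ) : F ⊕ F → ℕ
  | Sum.inl f => ar f
  | Sum.inr f => ar f

/-- The embedding of `𝒯(𝓕)`-terms into terms over `𝓕 ∪ {f° : f ∈ 𝓕}`. -/
def liftC {F : Type} {ar : F → ℕ} : Term F ar → Term (F ⊕ F) (arC ar) :=
  Term.relabel Sum.inl (fun _ => rfl)

/-- `t°`: mark the root symbol of `t`. -/
def circTm {F : Type} {ar : F → ℕ} : Term F ar → Term (F ⊕ F) (arC ar)
  | Term.var n => Term.var n
  | Term.app f ts => Term.app (Sum.inr f) fun i => liftC (ts i)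

/-- A TRS over `𝓕` viewed as a TRS over `𝓕 ∪ {f° : f ∈ 𝓕}`. -/
def TRS.liftC {F : Type} {ar : F → ℕ} (R : TRS F ar) : TRS (F ⊕ F) (arC ar) :=
  R.relabel Sum.inl (fun _ => rfl)

/-- The TRS `𝒮° = 𝒮 ∪ {l° → r | l → r ∈ 𝒮}` over the signature `𝓕 ∪ {f° : f ∈ 𝓕}`. -/
def TRS.circ {F : Type} {ar : F → ℕ} (S : TRS F ar) : TRS (F ⊕ F) (arC ar) where
  rules := S.liftC.rules ∪ (fun lr => (circTm lr.1, _root_.liftC lr.2)) '' S.rules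
  finite := S.liftC.finite.union (S.finite.image _)
  lhs_not_var := by
    rintro lr (h | ⟨lr0, h0, rfl⟩) n hn
    · exact S.liftC.lhs_not_var lr h n hn
    · dsimp only at hn
      cases h1 : lr0.1 with
      | var m => exact absurd h1 (S.lhs_not_var lr0 h0 m)
      | app f ts =>
          rw [h1] at hn
          simp only [circTm] at hn
          exact nomatch hn

/-- The transitions added to `ℬ(𝒮°)` to obtain `𝒜_{REDEX_{𝒮°}}`:
`f(⟨l₁⟩,…,⟨lₙ⟩) → q_f` and `f°(⟨l₁⟩,…,⟨lₙ⟩) → q_f` for each left-hand side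
`f(l₁,…,lₙ)` of a rule of `𝒮`. -/
def CircRedexRules {F : Type} {ar : F → ℕ} {Q : Type} (S : TRS F ar)
    (enc : Term (F ⊕ F) (arC ar) → Q) (qf : Q) : Set (TARule (F ⊕ F) (arC ar) Q) :=
  { ρ | ∃ (f : F) (ls : Fin (ar f) → Term F ar) (r : Term F ar),
      (Term.app f ls, r) ∈ S.rules ∧
      (ρ = ⟨Sum.inl f, fun i => enc (stPattern (liftC (ls i))), qf⟩ ∨
       ρ = ⟨Sum.inr f, fun i => enc (stPattern (liftC (ls i))), qf⟩) }

/-! ## The automaton `𝒟'(ℛ,𝒮)` -/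

/-- The data of the construction of `𝒞'_{RS_{𝒮°}}(ℛ)`: the saturated automaton
`𝒞_{RS_{𝒮°}}(ℛ)`, a fresh copy `⟪t⟫` (encoded by `enc2`, with `⟪x⟫ = ⟨x⟩`) of the
states of `ℬ(ℛ)`, and an automaton `𝒞_{REDEX_𝒮}(𝒮)` (transitions `Etrans`, final
states `Qf'`) recognizing the non-`𝒮`-root-stable ground terms of `𝒯(𝓕)`. -/
structure CrsSetup {F : Type} [Fintype F] {ar : F → ℕ} (Q : Type) [Fintype Q]
    (R S : TRS F ar) extends CSetup Q R.liftC (TRS.RSset S.circ) where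
  enc2 : Term (F ⊕ F) (arC ar) → Q
  henc2 : Set.InjOn enc2 (BStateSet R.liftC)
  hx : enc2 (Term.var 0) = enc (Term.var 0)
  hfresh2 : (enc2 '' (BStateSet R.liftC \ {Term.var 0})) ∩
              (QA ∪ enc '' BStateSet R.liftC) = ∅
  Etrans : Set (TARule (F ⊕ F) (arC ar) Q)
  Qf' : Set Q
  hQf' : Qf' ⊆ statesOf Etrans
  hEfresh : statesOf Etrans ∩
      (QA ∪ enc '' BStateSet R.liftC ∪ enc2 '' (BStateSet R.liftC \ {Term.var 0})) = ∅
  hE : ∀ t : Term (F ⊕ F) (arC ar),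
      (t.Ground ∧ ∃ q ∈ Qf', Reaches Etrans t q) ↔
      (∃ s : Term F ar, t = liftC s ∧ s.Ground ∧ ¬ S.RootStable s)

namespace CrsSetup

variable {F : Type} [Fintype F] {ar : F → ℕ} {Q : Type} [Fintype Q] {R S : TRS F ar}

/-- The transition rules `Γ'` of the automaton `𝒞'_{RS_{𝒮°}}(ℛ)`. -/
def Γ' (C : CrsSetup Q R S) : Set (TARule (F ⊕ F) (arC ar) Q) :=
  C.toCSetup.Γsat ∪ BMatch R.liftC C.enc2 ∪ C.Etrans

end CrsSetup

/-- The transition rules of the automaton `𝒟'(ℛ,𝒮)` over `𝓕`, built from the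
transition rules `Γ'` of `𝒞'_{RS_{𝒮°}}(ℛ)`. -/
def DTransRS {F : Type} {ar : F → ℕ} {Q : Type} (Rg : TRS (F ⊕ F) (arC ar))
    (Γ' : Set (TARule (F ⊕ F) (arC ar) Q)) (enc2 : Term (F ⊕ F) (arC ar) → Q) :
    Set (TARule F ar (Set Q × Set Q)) :=
  { ρ | ∃ (f : F) (SP : Fin (ar f) → Set Q × Set Q) (P1 P2 : Set Q),
      P1 ⊆ (⋃ i : Fin (ar f), oneStep Γ' (Sum.inl f)
              (fun (j : Fin (ar f)) => if j = i then (SP j).2 else (SP j).1)) ∧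
      (∀ (i : Fin (ar f)), ∀ q ∈ (SP i).2,
        (P1 ∩ oneStep Γ' (Sum.inl f) (fun (j : Fin (ar f)) => if j = i then {q} else (SP j).1)).Nonempty) ∧
      ((LhsMatch Rg enc2 (Sum.inl f) (fun i => (SP i).1) ∧ P2.Nonempty ∧
          P2 ⊆ oneStep Γ' (Sum.inr f) (fun i => (SP i).1)) ∨
       (¬ LhsMatch Rg enc2 (Sum.inl f) (fun i => (SP i).1) ∧ P2 = (∅ : Set Q))) ∧
      ρ = ⟨f, SP, (oneStep Γ' (Sum.inl f) (fun i => (SP i).1), P1 ∪ P2)⟩ }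

/-- The automaton `𝒟'(ℛ,𝒮)`: final states are the pairs `[S,P]` with
`S ∩ Q_f' ≠ ∅` and `P ⊆ Q_f`. -/
def DAutomatonRS {F : Type} {ar : F → ℕ} {Q : Type} (Rg : TRS (F ⊕ F) (arC ar))
    (Γ' : Set (TARule (F ⊕ F) (arC ar) Q)) (enc2 : Term (F ⊕ F) (arC ar) → Q)
    (Qf' Qf : Set Q) : TreeAutomaton F ar (Set Q × Set Q) where
  trans := DTransRS Rg Γ' enc2
  final := { SP | (SP.1 ∩ Qf').Nonempty ∧ SP.2 ⊆ Qf }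

/-!
Reading `s` bottom-up, `𝒟'(ℛ,𝒮)` keeps in the first component of its state the set `s↓` of
states of `𝒞'_{RS_{𝒮°}}(ℛ)` reached by `s`, and in the second component a set `P` of states
reached by the marked terms `s[(s|_p)°]_p`, at least one for each redex position `p`. Whether
`f(t₁,…,tₙ)` is itself an `ℛ`-redex is visible in the first components of the arguments through
the copy `⟪·⟫` of `ℬ(ℛ)`; this is where a mark at the root is created, marks further down being
propagated from the arguments. The fresh states of `𝒞_{REDEX_𝒮}(𝒮)` make `s↓ ∩ Q_f' ≠ ∅` mean that
`s` is not `𝒮`-root-stable, and since `𝒞_{RS_{𝒮°}}(ℛ)` recognizes `(→_ℛ*)[RS_{𝒮°}]` for a linear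
growing `ℛ`, `P ⊆ Q_f` says that every marked term rewrites into `RS_{𝒮°}`.
-/

-- lets `simp` identify `Fin (arC ar (Sum.inl f))` with `Fin (ar f)`
attribute [reducible] arC

namespace Term

variable {F : Type} {ar : F → ℕ}

@[simp] lemma vars_var (n : ℕ) : (var n : Term F ar).vars = {n} := rfl

lemma mem_vars_app {f : F} {ts : Fin (ar f) → Term F ar} {n : ℕ} :
    n ∈ (app f ts).vars ↔ ∃ i, n ∈ (ts i).vars := by
  simp [vars]

lemma ground_app {f : F} {ts : Fin (ar f) → Term F ar} :
    (app f ts).Ground ↔ ∀ i, (ts i).Ground := by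
  simp [Ground, vars, ← Finset.not_nonempty_iff_eq_empty]

lemma not_ground_var (n : ℕ) : ¬ (var n : Term F ar).Ground := by
  simp [Ground, vars]

@[simp] lemma subst_var (σ : ℕ → Term F ar) (n : ℕ) : (var n).subst σ = σ n := rfl

lemma subst_congr {t : Term F ar} {σ σ' : ℕ → Term F ar}
    (h : ∀ n ∈ t.vars, σ n = σ' n) : t.subst σ = t.subst σ' := by
  induction t with
  | var n => exact h n (by simp)
  | app f ts ih =>
      exact congrArg _ (funext fun i => ih i fun n hn => h n (mem_vars_app.2 ⟨i, hn⟩))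

lemma ground_subst {t : Term F ar} {σ : ℕ → Term F ar} (h : ∀ n, (σ n).Ground) :
    (t.subst σ).Ground := by
  induction t with
  | var n => exact h n
  | app f ts ih => exact ground_app.2 ih

lemma subst_subst (t : Term F ar) (σ τ : ℕ → Term F ar) :
    (t.subst σ).subst τ = t.subst fun n => (σ n).subst τ := by
  induction t with
  | var n => rfl
  | app f ts ih => exact congrArg _ (funext ih)

lemma Ground.subst_eq {t : Term F ar} (h : t.Ground) (τ : ℕ → Term F ar) : t.subst τ = t := by
  induction t with
  | var n => exact absurd h (not_ground_var n)
  | app f ts ih => exact congrArg _ (funext fun i => ih i (ground_app.1 h i))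

lemma count_pos_iff_mem_vars {t : Term F ar} {n : ℕ} : 0 < t.count n ↔ n ∈ t.vars := by
  induction t with
  | var m =>
      rcases eq_or_ne m n with rfl | h
      · simp [count]
      · simp [count, h, h.symm]
  | app f ts ih => simp [count, mem_vars_app, Finset.sum_pos_iff, ← ih]

lemma Linear.arg {f : F} {ts : Fin (ar f) → Term F ar} (h : (app f ts).Linear)
    (i : Fin (ar f)) : (ts i).Linear := fun n =>
  (Finset.single_le_sum (f := fun j => (ts j).count n) (by simp) (Finset.mem_univ i)).trans (h n)

lemma Linear.eq_of_mem_vars {f : F} {ts : Fin (ar f) → Term F ar} (h : (app f ts).Linear)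
    {n : ℕ} {i j : Fin (ar f)} (hi : n ∈ (ts i).vars) (hj : n ∈ (ts j).vars) : i = j := by
  by_contra hij
  have hpair : (ts i).count n + (ts j).count n ≤ ∑ k, (ts k).count n := by
    rw [← Finset.sum_pair (f := fun k => (ts k).count n) hij]
    exact Finset.sum_le_sum_of_subset (Finset.subset_univ _)
  have := h n
  have := count_pos_iff_mem_vars.2 hi
  have := count_pos_iff_mem_vars.2 hj
  simp only [count] at *
  omega

/-- Linearity makes the `lᵢ` variable-disjoint, so assignments chosen for each `lᵢ` separately
combine into one. -/
lemma Linear.exists_glue {α : Type*} {f : F} {ls : Fin (ar f) → Term F ar}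
    (h : (app f ls).Linear) (θs : Fin (ar f) → ℕ → α) (τ : ℕ → α) :
    ∃ θ : ℕ → α, (∀ i, ∀ n ∈ (ls i).vars, θ n = θs i n) ∧
      ∀ n ∉ (app f ls).vars, θ n = τ n := by
  classical
  refine ⟨fun n => if hn : ∃ i, n ∈ (ls i).vars then θs hn.choose n else τ n, ?_, ?_⟩
  · intro i n hn
    have hex : ∃ j, n ∈ (ls j).vars := ⟨i, hn⟩
    simp only [dif_pos hex, h.eq_of_mem_vars hn hex.choose_spec]
  · intro n hn
    simp only [dif_neg (mt mem_vars_app.2 hn)]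

lemma Linear.exists_subst_app {f : F} {ls ts : Fin (ar f) → Term F ar}
    (h : (app f ls).Linear) (hts : ∀ i, ∃ σ, ts i = (ls i).subst σ) (τ : ℕ → Term F ar) :
    ∃ σ, app f ts = (app f ls).subst σ ∧ ∀ n ∉ (app f ls).vars, σ n = τ n := by
  choose σs hσs using hts
  obtain ⟨σ, hσ, hτ⟩ := h.exists_glue σs τ
  refine ⟨σ, congrArg _ (funext fun i => ?_), hτ⟩
  rw [hσs i]
  exact subst_congr fun n hn => (hσ i n hn).symm

lemma subtermAt_nil (t : Term F ar) : t.subtermAt [] = some t := by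
  cases t <;> rfl

lemma replaceAt_nil (t u : Term F ar) : t.replaceAt [] u = some u := by
  cases t <;> rfl

lemma subtermAt_cons {f : F} {ts : Fin (ar f) → Term F ar} {i : ℕ} {p : List ℕ}
    {u : Term F ar} :
    (app f ts).subtermAt (i :: p) = some u ↔ ∃ h : i < ar f, (ts ⟨i, h⟩).subtermAt p = some u := by
  simp only [subtermAt]
  split <;> simp [*]

lemma replaceAt_cons {f : F} {ts : Fin (ar f) → Term F ar} {i : ℕ} {p : List ℕ}
    {w v : Term F ar} :
    (app f ts).replaceAt (i :: p) w = some v ↔ ∃ (h : i < ar f) (v' : Term F ar),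
      (ts ⟨i, h⟩).replaceAt p w = some v' ∧ v = app f (Function.update ts ⟨i, h⟩ v') := by
  simp only [replaceAt]
  split <;> simp [*, eq_comm]

lemma subtermAt_append (t : Term F ar) (p q : List ℕ) :
    t.subtermAt (p ++ q) = (t.subtermAt p).bind (·.subtermAt q) := by
  induction p generalizing t with
  | nil => simp [subtermAt_nil]
  | cons i p ih =>
      cases t with
      | var n => rfl
      | app f ts =>
          simp only [List.cons_append, subtermAt]
          split
          · exact ih _
          · rfl

lemma Ground.subtermAt {t u : Term F ar} {p : List ℕ} (ht : t.Ground)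
    (h : t.subtermAt p = some u) : u.Ground := by
  induction p generalizing t with
  | nil => rw [subtermAt_nil] at h; cases h; exact ht
  | cons i p ih =>
      cases t with
      | var n => exact nomatch h
      | app f ts =>
          obtain ⟨_, h⟩ := subtermAt_cons.1 h
          exact ih (ground_app.1 ht _) h

lemma Linear.subtermAt {t u : Term F ar} {p : List ℕ} (ht : t.Linear)
    (h : t.subtermAt p = some u) : u.Linear := by
  induction p generalizing t with
  | nil => rw [subtermAt_nil] at h; cases h; exact ht
  | cons i p ih =>
      cases t with
      | var n => exact nomatch h
      | app f ts =>
          obtain ⟨_, h⟩ := subtermAt_cons.1 h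
          exact ih (ht.arg _) h

lemma Ground.replaceAt {t w v : Term F ar} {p : List ℕ} (ht : t.Ground) (hw : w.Ground)
    (h : t.replaceAt p w = some v) : v.Ground := by
  induction p generalizing t v with
  | nil => rw [replaceAt_nil] at h; cases h; exact hw
  | cons i p ih =>
      cases t with
      | var n => exact nomatch h
      | app f ts =>
          obtain ⟨hi, v', hv', rfl⟩ := replaceAt_cons.1 h
          refine ground_app.2 fun j => ?_
          rcases eq_or_ne j ⟨i, hi⟩ with rfl | hj
          · simpa using ih (ground_app.1 ht _) hv'
          · simpa [hj] using ground_app.1 ht j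

lemma subtermAt_subst {t u : Term F ar} {p : List ℕ} (h : t.subtermAt p = some u)
    (τ : ℕ → Term F ar) : (t.subst τ).subtermAt p = some (u.subst τ) := by
  induction p generalizing t with
  | nil => rw [subtermAt_nil] at h; cases h; exact subtermAt_nil _
  | cons i p ih =>
      cases t with
      | var n => exact nomatch h
      | app f ts =>
          obtain ⟨hi, h⟩ := subtermAt_cons.1 h
          exact subtermAt_cons.2 ⟨hi, ih h⟩

lemma replaceAt_subst {t w v : Term F ar} {p : List ℕ} (h : t.replaceAt p w = some v)
    (τ : ℕ → Term F ar) : (t.subst τ).replaceAt p (w.subst τ) = some (v.subst τ) := by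
  induction p generalizing t v with
  | nil => rw [replaceAt_nil] at h; cases h; exact replaceAt_nil _ _
  | cons i p ih =>
      cases t with
      | var n => exact nomatch h
      | app f ts =>
          obtain ⟨hi, v', hv', rfl⟩ := replaceAt_cons.1 h
          refine replaceAt_cons.2 ⟨hi, _, ih hv', congrArg _ (funext fun j => ?_)⟩
          rcases eq_or_ne j ⟨i, hi⟩ with rfl | hj <;> simp [*]

end Term

section Marking

variable {F : Type} {ar : F → ℕ}

lemma liftC_app (f : F) (ts : Fin (ar f) → Term F ar) :
    liftC (Term.app f ts) = Term.app (Sum.inl f) fun i => liftC (ts i) := rfl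

def eraseMarks : Term (F ⊕ F) (arC ar) → Term F ar
  | Term.var n => Term.var n
  | Term.app (Sum.inl f) ts => Term.app f fun i => eraseMarks (ts i)
  | Term.app (Sum.inr f) ts => Term.app f fun i => eraseMarks (ts i)

lemma eraseMarks_liftC (t : Term F ar) : eraseMarks (liftC t) = t := by
  induction t with
  | var n => rfl
  | app f ts ih => exact congrArg _ (funext ih)

lemma liftC_injective : Function.Injective (liftC : Term F ar → Term (F ⊕ F) (arC ar)) :=
  Function.LeftInverse.injective eraseMarks_liftC

lemma eraseMarks_subst (t : Term (F ⊕ F) (arC ar)) (σ : ℕ → Term (F ⊕ F) (arC ar)) :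
    eraseMarks (t.subst σ) = (eraseMarks t).subst (eraseMarks ∘ σ) := by
  induction t with
  | var n => rfl
  | app g ts ih => cases g <;> exact congrArg _ (funext ih)

lemma exists_subst_of_liftC_eq_subst {t u : Term F ar} {σ : ℕ → Term (F ⊕ F) (arC ar)}
    (h : liftC u = (liftC t).subst σ) : ∃ τ, u = t.subst τ :=
  ⟨eraseMarks ∘ σ, by rw [← eraseMarks_liftC u, h, eraseMarks_subst, eraseMarks_liftC]⟩

@[simp] lemma vars_liftC (t : Term F ar) : (liftC t).vars = t.vars := by
  induction t with
  | var n => rfl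
  | app f ts ih => exact congrArg (Finset.univ.biUnion ·) (funext ih)

lemma ground_liftC {t : Term F ar} : (liftC t).Ground ↔ t.Ground := by
  simp [Term.Ground]

lemma linear_liftC {t : Term F ar} (h : t.Linear) : (liftC t).Linear := by
  intro n
  refine le_of_eq_of_le ?_ (h n)
  induction t with
  | var m => rfl
  | app f ts ih => exact Finset.sum_congr rfl fun i _ => ih i (h.arg i)

lemma liftC_subst (t : Term F ar) (σ : ℕ → Term F ar) :
    liftC (t.subst σ) = (liftC t).subst (liftC ∘ σ) := by
  induction t with
  | var n => rfl
  | app f ts ih => exact congrArg _ (funext ih)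

lemma ground_circTm {t : Term F ar} (h : t.Ground) : (circTm t).Ground := by
  cases t with
  | var n => exact absurd h (Term.not_ground_var n)
  | app f ts => exact Term.ground_app.2 fun i => ground_liftC.2 (Term.ground_app.1 h i)

lemma replaceAt_liftC_cons {f : F} {ts : Fin (ar f) → Term F ar} {i : ℕ} {p : List ℕ}
    {w v : Term (F ⊕ F) (arC ar)} :
    (liftC (Term.app f ts)).replaceAt (i :: p) w = some v ↔ ∃ (h : i < ar f) (v' : Term _ _),
      (liftC (ts ⟨i, h⟩)).replaceAt p w = some v' ∧
        v = Term.app (Sum.inl f) (Function.update (fun j => liftC (ts j)) ⟨i, h⟩ v') :=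
  Term.replaceAt_cons

end Marking

section Reachability

variable {G : Type} {arG : G → ℕ} {Q : Type} {Γ Γ₁ : Set (TARule G arG Q)}

lemma Reaches.mono (h : Γ ⊆ Γ₁) {t : Term G arG} {q : Q} (ht : Reaches Γ t q) :
    Reaches Γ₁ t q := by
  induction ht with
  | app _ hρ ih => exact Reaches.app ih (h hρ)

lemma Reaches.ground {t : Term G arG} {q : Q} (ht : Reaches Γ t q) : t.Ground := by
  induction ht with
  | app _ _ ih => exact Term.ground_app.2 ih

lemma reaches_app_iff {f : G} {ts : Fin (arG f) → Term G arG} {q : Q} :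
    Reaches Γ (Term.app f ts) q ↔
      ∃ qs : Fin (arG f) → Q, (∀ i, Reaches Γ (ts i) (qs i)) ∧ (⟨f, qs, q⟩ : TARule G arG Q) ∈ Γ :=
  ⟨fun | .app hts hρ => ⟨_, hts, hρ⟩, fun ⟨_, hts, hρ⟩ => .app hts hρ⟩

lemma dn_app {f : G} {ts : Fin (arG f) → Term G arG} :
    dn Γ (Term.app f ts) = oneStep Γ f fun i => dn Γ (ts i) :=
  Set.ext fun _ => reaches_app_iff

lemma oneStep_mono {g : G} {Ss Ss' : Fin (arG g) → Set Q} (h : ∀ i, Ss i ⊆ Ss' i) :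
    oneStep Γ g Ss ⊆ oneStep Γ g Ss' :=
  fun _ ⟨qs, hqs, hρ⟩ => ⟨qs, fun i => h i (hqs i), hρ⟩

lemma Reaches.mem_statesOf {t : Term G arG} {q : Q} (h : Reaches Γ t q) : q ∈ statesOf Γ := by
  cases h with
  | app _ hρ => exact ⟨_, hρ, Or.inl rfl⟩

lemma Reaches.of_closed {X : Set Q}
    (hX : ∀ ρ ∈ Γ, ρ.2.2 ∈ X → ρ ∈ Γ₁ ∧ ∀ i, ρ.2.1 i ∈ X) {t : Term G arG} {q : Q}
    (h : Reaches Γ t q) (hq : q ∈ X) : Reaches Γ₁ t q := by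
  induction h with
  | app _ hρ ih =>
      obtain ⟨hρ₁, hargs⟩ := hX _ hρ hq
      exact Reaches.app (fun i => ih i (hargs i)) hρ₁

lemma ReachesT.mono (h : Γ ⊆ Γ₁) {θ : ℕ → Q} {t : Term G arG} {q : Q}
    (ht : ReachesT Γ θ t q) : ReachesT Γ₁ θ t q := by
  induction ht with
  | var n => exact .var n
  | app _ hρ ih => exact .app ih (h hρ)

lemma ReachesT.congr {θ θ' : ℕ → Q} {t : Term G arG} {q : Q} (ht : ReachesT Γ θ t q)
    (h : ∀ n ∈ t.vars, θ n = θ' n) : ReachesT Γ θ' t q := by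
  induction ht with
  | var n => exact h n (by simp) ▸ .var n
  | app _ hρ ih => exact .app (fun i => ih i fun n hn => h n (Term.mem_vars_app.2 ⟨i, hn⟩)) hρ

lemma ReachesT.reaches_subst {θ : ℕ → Q} {σ : ℕ → Term G arG} {t : Term G arG} {q : Q}
    (ht : ReachesT Γ θ t q) (hσ : ∀ n ∈ t.vars, Reaches Γ (σ n) (θ n)) :
    Reaches Γ (t.subst σ) q := by
  induction ht with
  | var n => exact hσ n (by simp)
  | app _ hρ ih => exact .app (fun i => ih i fun n hn => hσ n (Term.mem_vars_app.2 ⟨i, hn⟩)) hρ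

lemma ReachesT.eq_or_mem_statesOf {θ : ℕ → Q} {t : Term G arG} {q : Q}
    (h : ReachesT Γ θ t q) : (∃ n ∈ t.vars, q = θ n) ∨ q ∈ statesOf Γ := by
  cases h with
  | var n => exact Or.inl ⟨n, by simp, rfl⟩
  | app _ hρ => exact Or.inr ⟨_, hρ, Or.inl rfl⟩

lemma Reaches.exists_reachesT {σ : ℕ → Term G arG} {t : Term G arG} {q : Q}
    (h : Reaches Γ (t.subst σ) q) (hlin : t.Linear) :
    ∃ θ : ℕ → Q, ReachesT Γ θ t q ∧ ∀ n ∈ t.vars, Reaches Γ (σ n) (θ n) := by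
  induction t generalizing q with
  | var n => exact ⟨fun _ => q, .var n, fun m hm => by simp_all⟩
  | app f ts ih =>
      obtain ⟨qs, hts, hρ⟩ := reaches_app_iff.1 h
      choose θs hθs hσ using fun i => ih i (hts i) (hlin.arg i)
      obtain ⟨θ, hθ, -⟩ := hlin.exists_glue θs fun _ => q
      refine ⟨θ, .app (fun i => (hθs i).congr fun n hn => (hθ i n hn).symm) hρ, ?_⟩
      intro n hn
      obtain ⟨i, hi⟩ := Term.mem_vars_app.1 hn
      exact hθ i n hi ▸ hσ i n hi

end Reachability

section Rewriting

variable {F : Type} {ar : F → ℕ} {R : Set (Term F ar × Term F ar)}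

lemma rewrites_root {l r : Term F ar} (h : (l, r) ∈ R) (σ : ℕ → Term F ar) :
    Rewrites R (l.subst σ) (r.subst σ) :=
  ⟨[], l, r, σ, h, Term.subtermAt_nil _, Term.replaceAt_nil _ _⟩

lemma Rewrites.update_arg {f : F} (ts : Fin (ar f) → Term F ar) (i : Fin (ar f))
    {a b : Term F ar} (hab : Rewrites R a b) :
    Rewrites R (Term.app f (Function.update ts i a)) (Term.app f (Function.update ts i b)) := by
  obtain ⟨p, l, r, σ, hlr, hsub, hrep⟩ := hab
  refine ⟨i.1 :: p, l, r, σ, hlr, Term.subtermAt_cons.2 ⟨i.2, by simpa using hsub⟩,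
    Term.replaceAt_cons.2 ⟨i.2, b, by simpa using hrep, by simp⟩⟩

lemma rewritesStar_app {f : F} {ts ts' : Fin (ar f) → Term F ar}
    (h : ∀ i, RewritesStar R (ts i) (ts' i)) :
    RewritesStar R (Term.app f ts) (Term.app f ts') := by
  classical
  suffices ∀ A : Finset (Fin (ar f)),
      RewritesStar R (Term.app f ts) (Term.app f fun i => if i ∈ A then ts' i else ts i) by
    simpa using this Finset.univ
  intro A
  induction A using Finset.induction with
  | empty => simpa using Relation.ReflTransGen.refl
  | insert j A hj ih =>
      set g : Fin (ar f) → Term F ar := fun i => if i ∈ A then ts' i else ts i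
      have hstep := (h j).lift (fun a => Term.app f (Function.update g j a))
        fun _ _ => Rewrites.update_arg g j
      have hgj : Function.update g j (ts j) = g := by simp [g, hj]
      have hgj' : Function.update g j (ts' j) =
          fun i => if i ∈ insert j A then ts' i else ts i := by
        funext i
        by_cases hij : i = j <;> simp [g, hij]
      exact ih.trans (hgj ▸ hgj' ▸ hstep)

lemma Rewrites.subst {u v : Term F ar} (h : Rewrites R u v) (τ : ℕ → Term F ar) :
    Rewrites R (u.subst τ) (v.subst τ) := by
  obtain ⟨p, l, r, σ, hlr, hsub, hrep⟩ := h
  refine ⟨p, l, r, fun n => (σ n).subst τ, hlr, ?_, ?_⟩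
  · simpa [Term.subst_subst] using Term.subtermAt_subst hsub τ
  · simpa [Term.subst_subst] using Term.replaceAt_subst hrep τ

end Rewriting

section MatchingAutomaton

variable {G : Type} {arG : G → ℕ} {Q : Type} {Rg : TRS G arG} {enc : Term G arG → Q}
  {Γ : Set (TARule G arG Q)}

@[simp] lemma stPattern_app (f : G) (ts : Fin (arG f) → Term G arG) :
    stPattern (Term.app f ts) = Term.app f ts := rfl

lemma exists_subst_of_stPattern {s u : Term G arG} (h : ∃ σ, u = (stPattern s).subst σ) :
    ∃ σ, u = s.subst σ := by
  cases s with
  | var n => exact ⟨fun _ => u, rfl⟩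
  | app f ts => exact h

lemma TRS.exists_eq_app_of_mem_rules {l r : Term G arG} (hlr : (l, r) ∈ Rg.rules) :
    ∃ f ls, l = Term.app f ls := by
  cases l with
  | var n => exact absurd rfl (Rg.lhs_not_var _ hlr n)
  | app f ls => exact ⟨f, ls, rfl⟩

lemma lhs_arg_mem_SR {f : G} {ls : Fin (arG f) → Term G arG} {r : Term G arG}
    (h : (Term.app f ls, r) ∈ Rg.rules) (i : Fin (arG f)) : ls i ∈ SR Rg :=
  ⟨_, h, f, ls, rfl, i, [], Term.subtermAt_nil _⟩

lemma SR.arg {f : G} {ts : Fin (arG f) → Term G arG} (hs : Term.app f ts ∈ SR Rg)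
    (i : Fin (arG f)) : ts i ∈ SR Rg := by
  obtain ⟨lr, hlr, g, ls, hl, j, p, hp⟩ := hs
  refine ⟨lr, hlr, g, ls, hl, j, p ++ [i.1], ?_⟩
  rw [Term.subtermAt_append, hp]
  exact Term.subtermAt_cons.2 ⟨i.2, Term.subtermAt_nil _⟩

lemma SR.linear (hL : Rg.LeftLinear) {s : Term G arG} (hs : s ∈ SR Rg) : s.Linear := by
  obtain ⟨lr, hlr, f, ts, hl, i, p, hp⟩ := hs
  exact ((hl ▸ hL lr hlr).arg i).subtermAt hp

lemma stPattern_mem_BStateSet {s : Term G arG} (hs : s ∈ SR Rg) : stPattern s ∈ BStateSet Rg :=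
  Or.inl ⟨s, hs, rfl⟩

lemma var_mem_BStateSet : Term.var 0 ∈ BStateSet Rg := Or.inr rfl

lemma reaches_enc_var (hΓ : BProp enc ⊆ Γ) {u : Term G arG} (hu : u.Ground) :
    Reaches Γ u (enc (Term.var 0)) := by
  induction u with
  | var n => exact absurd hu (Term.not_ground_var n)
  | app f ts ih => exact .app (fun i => ih i (Term.ground_app.1 hu i)) (hΓ ⟨f, rfl⟩)

lemma reaches_subst_of_mem_SR (hΓ : BTrans Rg enc ⊆ Γ) {t : Term G arG} (ht : t ∈ SR Rg)
    {σ : ℕ → Term G arG} (hg : (t.subst σ).Ground) :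
    Reaches Γ (t.subst σ) (enc (stPattern t)) := by
  induction t with
  | var n => exact reaches_enc_var (fun ρ hρ => hΓ (Or.inr hρ)) hg
  | app f ts ih =>
      exact .app (fun i => ih i (SR.arg ht i) (Term.ground_app.1 hg i))
        (hΓ (Or.inl ⟨f, ts, ht, rfl⟩))

lemma BTrans.states_mem {ρ : TARule G arG Q} (h : ρ ∈ BTrans Rg enc) :
    ρ.2.2 ∈ enc '' BStateSet Rg ∧ ∀ i, ρ.2.1 i ∈ enc '' BStateSet Rg := by
  rcases h with ⟨f, ts, hSR, rfl⟩ | ⟨f, rfl⟩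
  · exact ⟨⟨_, stPattern_mem_BStateSet hSR, rfl⟩,
      fun i => ⟨_, stPattern_mem_BStateSet (SR.arg hSR i), rfl⟩⟩
  · exact ⟨⟨_, var_mem_BStateSet, rfl⟩, fun _ => ⟨_, var_mem_BStateSet, rfl⟩⟩

lemma exists_subst_of_reaches_enc (hL : Rg.LeftLinear) (hinj : Set.InjOn enc (BStateSet Rg))
    (hΓ : ∀ ρ ∈ Γ, ρ.2.2 ∈ enc '' (BStateSet Rg \ {Term.var 0}) → ρ ∈ BMatch Rg enc)
    {u : Term G arG} {q : Q} (h : Reaches Γ u q) :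
    ∀ s ∈ BStateSet Rg, q = enc s → ∃ σ, u = s.subst σ := by
  induction h with
  | @app f ts qs q hts hρ ih =>
      intro s hs hq
      by_cases hs0 : s = Term.var 0
      · exact ⟨fun _ => _, by rw [hs0]; rfl⟩
      obtain ⟨g, us, hSR, hρeq⟩ := hΓ _ hρ ⟨s, ⟨hs, hs0⟩, hq.symm⟩
      obtain ⟨rfl, hρeq⟩ := Sigma.mk.inj_iff.1 hρeq
      obtain ⟨rfl, rfl⟩ := Prod.ext_iff.1 (eq_of_heq hρeq)
      obtain rfl := hinj (stPattern_mem_BStateSet hSR) hs hq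
      refine (SR.linear hL hSR).exists_subst_app (fun i => ?_) (fun _ => Term.var 0) |>.imp
        fun _ h => h.1
      exact exists_subst_of_stPattern
        (ih i _ (stPattern_mem_BStateSet (SR.arg hSR i)) rfl)

end MatchingAutomaton

section Saturation

variable {G : Type} {arG : G → ℕ} {Q : Type}

lemma Reaches.exists_of_iUnion {Γs : ℕ → Set (TARule G arG Q)} (hmono : Monotone Γs)
    {t : Term G arG} {q : Q} (h : Reaches (⋃ n, Γs n) t q) : ∃ n, Reaches (Γs n) t q := by
  induction h with
  | app _ hρ ih =>
      choose ns hns using ih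
      obtain ⟨n₀, hn₀⟩ := Set.mem_iUnion.1 hρ
      refine ⟨Finset.univ.sup ns ⊔ n₀,
        .app (fun i => (hns i).mono (hmono ?_)) (hmono le_sup_right hn₀)⟩
      exact le_sup_of_le_left (Finset.le_sup (Finset.mem_univ i))

lemma ReachesT.exists_of_iUnion {Γs : ℕ → Set (TARule G arG Q)} (hmono : Monotone Γs)
    {θ : ℕ → Q} {t : Term G arG} {q : Q} (h : ReachesT (⋃ n, Γs n) θ t q) :
    ∃ n, ReachesT (Γs n) θ t q := by
  induction h with
  | var n => exact ⟨0, .var n⟩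
  | app _ hρ ih =>
      choose ns hns using ih
      obtain ⟨n₀, hn₀⟩ := Set.mem_iUnion.1 hρ
      refine ⟨Finset.univ.sup ns ⊔ n₀,
        .app (fun i => (hns i).mono (hmono ?_)) (hmono le_sup_right hn₀)⟩
      exact le_sup_of_le_left (Finset.le_sup (Finset.mem_univ i))

lemma Reaches.of_rewrites {Γ : Set (TARule G arG Q)} {R : Set (Term G arG × Term G arG)}
    (hroot : ∀ l r σ q, (l, r) ∈ R → (l.subst σ).Ground → Reaches Γ (r.subst σ) q →
      Reaches Γ (l.subst σ) q)
    {t t' : Term G arG} {q : Q} (ht : t.Ground) (h : Rewrites R t t') (h' : Reaches Γ t' q) :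
    Reaches Γ t q := by
  revert h'
  obtain ⟨p, l, r, σ, hlr, hsub, hrep⟩ := h
  induction p generalizing t t' q with
  | nil =>
      rw [Term.subtermAt_nil, Option.some_inj] at hsub
      rw [Term.replaceAt_nil, Option.some_inj] at hrep
      subst hsub hrep
      exact hroot l r σ q hlr ht
  | cons i p ih =>
      cases t with
      | var n => exact nomatch hsub
      | app f ts =>
          obtain ⟨hi, hsub⟩ := Term.subtermAt_cons.1 hsub
          obtain ⟨_, v, hv, rfl⟩ := Term.replaceAt_cons.1 hrep
          intro h'
          obtain ⟨qs, hargs, hρ⟩ := reaches_app_iff.1 h'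
          refine .app (fun j => ?_) hρ
          rcases eq_or_ne j ⟨i, hi⟩ with rfl | hj
          · exact ih (Term.ground_app.1 ht _) hsub hv (by simpa using hargs ⟨i, hi⟩)
          · simpa [hj] using hargs j

lemma Reaches.of_rewritesStar {Γ : Set (TARule G arG Q)} {R : Set (Term G arG × Term G arG)}
    (hroot : ∀ l r σ q, (l, r) ∈ R → (l.subst σ).Ground → Reaches Γ (r.subst σ) q →
      Reaches Γ (l.subst σ) q)
    {w : Term G arG} (hw : w.Ground)
    {t t' : Term G arG} {q : Q} (ht : t.Ground) (h : RewritesStar R t t') (h' : Reaches Γ t' q) :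
    Reaches Γ t q := by
  -- intermediate terms may contain variables; ground them with `w`
  suffices ∀ u, RewritesStar R u t' → Reaches Γ (u.subst fun _ => w) q by
    simpa [ht.subst_eq] using this t h
  intro u hu
  induction hu using Relation.ReflTransGen.head_induction_on with
  | refl => rwa [h'.ground.subst_eq]
  | head hstep _ ih => exact .of_rewrites hroot (Term.ground_subst fun _ => hw) (hstep.subst _) ih

end Saturation

namespace CSetup

variable {G : Type} [Fintype G] {arG : G → ℕ} {Q : Type} [Fintype Q]
  {Rg : TRS G arG} {T : Set (Term G arG)} (C : CSetup Q Rg T)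

lemma Γ0_subset_Γsat : C.Γ0 ⊆ C.Γsat :=
  Set.subset_iUnion (fun n => (satStep Rg C.enc C.Qstates)^[n] C.Γ0) 0

lemma btrans_subset_Γsat : BTrans Rg C.enc ⊆ C.Γsat :=
  Set.subset_union_right.trans C.Γ0_subset_Γsat

lemma monotone_iterate_satStep : Monotone fun n => (satStep Rg C.enc C.Qstates)^[n] C.Γ0 :=
  monotone_nat_of_le_succ fun n => by
    rw [Function.iterate_succ_apply']
    exact Set.subset_union_left

lemma satArg_mem_Qstates {θ : ℕ → Q} {rv : Finset ℕ} (hθ : ∀ n ∈ rv, θ n ∈ C.Qstates)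
    {f : G} {ls : Fin (arG f) → Term G arG} {r : Term G arG}
    (hlr : (Term.app f ls, r) ∈ Rg.rules) (i : Fin (arG f)) :
    satArg C.enc θ rv (ls i) ∈ C.Qstates := by
  have hSR := lhs_arg_mem_SR hlr i
  cases hls : ls i with
  | var n =>
      simp only [satArg]
      split_ifs with hn
      · exact hθ n hn
      · exact Or.inr ⟨_, var_mem_BStateSet, rfl⟩
  | app g ts => exact Or.inr ⟨_, stPattern_mem_BStateSet (hls ▸ hSR), rfl⟩

lemma statesOf_iterate_subset (n : ℕ) :
    statesOf ((satStep Rg C.enc C.Qstates)^[n] C.Γ0) ⊆ C.Qstates := by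
  induction n with
  | zero =>
      rintro q ⟨ρ, hA | hB, hq⟩
      · have := C.hAstates ρ hA
        rcases hq with rfl | ⟨i, rfl⟩
        exacts [Or.inl this.1, Or.inl (this.2 i)]
      · have := BTrans.states_mem hB
        rcases hq with rfl | ⟨i, rfl⟩
        exacts [Or.inr this.1, Or.inr (this.2 i)]
  | succ n ih =>
      rw [Function.iterate_succ_apply']
      rintro q ⟨ρ, hold | ⟨f, ls, r, θ, q', hlr, hθ, hreach, rfl⟩, hq⟩
      · exact ih ⟨ρ, hold, hq⟩
      · rcases hq with rfl | ⟨i, rfl⟩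
        · rcases hreach.eq_or_mem_statesOf with ⟨m, hm, rfl⟩ | hmem
          exacts [hθ m hm, ih hmem]
        · exact C.satArg_mem_Qstates hθ hlr i

lemma statesOf_Γsat_subset : statesOf C.Γsat ⊆ C.Qstates := by
  rintro q ⟨ρ, hρ, hq⟩
  obtain ⟨n, hn⟩ := Set.mem_iUnion.1 hρ
  exact C.statesOf_iterate_subset n ⟨ρ, hn, hq⟩

/-- Shared states accept the same terms in `𝒜_T` and in `ℬ(ℛ)`, so a run of their union can be
replayed in either of them. -/
lemma reaches_Γ0_split {u : Term G arG} {q : Q} (h : Reaches C.Γ0 u q) :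
    (q ∈ C.QA → Reaches C.A.trans u q) ∧
      (q ∈ C.enc '' BStateSet Rg → Reaches (BTrans Rg C.enc) u q) := by
  induction h with
  | @app f ts qs q _ hρ ih =>
      rcases hρ with hA | hB
      · have hA' := Reaches.app (fun i => (ih i).1 ((C.hAstates _ hA).2 i)) hA
        exact ⟨fun _ => hA', fun hq => (C.hshared q ⟨(C.hAstates _ hA).1, hq⟩ _).1 hA'⟩
      · have hB' := Reaches.app (fun i => (ih i).2 ((BTrans.states_mem hB).2 i)) hB
        exact ⟨fun hq => (C.hshared q ⟨hq, (BTrans.states_mem hB).1⟩ _).2 hB', fun _ => hB'⟩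

lemma exists_reaches_Γ0 {q : Q} (hq : q ∈ C.Qstates) :
    ∃ u : Term G arG, u.Ground ∧ Reaches C.Γ0 u q := by
  obtain ⟨w, hw⟩ := C.hground
  rcases hq with hQA | ⟨s, hs, rfl⟩
  · obtain ⟨u, hu, hr⟩ := C.hacc q hQA
    exact ⟨u, hu, hr.mono Set.subset_union_left⟩
  · have hBP : BProp C.enc ⊆ C.Γ0 := fun _ h => Or.inr (Or.inr h)
    rcases hs with ⟨t, ht, rfl⟩ | rfl
    · have hg : (t.subst fun _ => w).Ground := Term.ground_subst fun _ => hw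
      exact ⟨_, hg, reaches_subst_of_mem_SR (fun _ h => Or.inr h) ht hg⟩
    · exact ⟨w, hw, reaches_enc_var hBP hw⟩

/-- The saturation rule is exactly what makes a root step `lσ → rσ` invisible to the automaton. -/
lemma reaches_lhs_of_reaches_rhs (hRL : Rg.RightLinear) {l r : Term G arG}
    {σ : ℕ → Term G arG} {q : Q} (hlr : (l, r) ∈ Rg.rules) (hg : (l.subst σ).Ground)
    (hr : Reaches C.Γsat (r.subst σ) q) : Reaches C.Γsat (l.subst σ) q := by
  obtain ⟨θ, hθr, hσθ⟩ := hr.exists_reachesT (hRL _ hlr)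
  obtain ⟨m, hθm⟩ := ReachesT.exists_of_iUnion C.monotone_iterate_satStep hθr
  obtain ⟨f, ls, rfl⟩ := Rg.exists_eq_app_of_mem_rules hlr
  have hnew : (⟨f, fun i => satArg C.enc θ r.vars (ls i), q⟩ : TARule G arG Q) ∈
      (satStep Rg C.enc C.Qstates)^[m + 1] C.Γ0 := by
    rw [Function.iterate_succ_apply']
    exact Or.inr ⟨f, ls, r, θ, q, hlr, fun n hn => C.statesOf_Γsat_subset (hσθ n hn).mem_statesOf,
      hθm, rfl⟩
  refine .app (fun i => ?_) (Set.mem_iUnion_of_mem _ hnew)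
  have hgi := Term.ground_app.1 hg i
  have hSR := lhs_arg_mem_SR hlr i
  cases hls : ls i with
  | var n =>
      rw [hls] at hgi
      simp only [satArg]
      split_ifs with hn
      · exact hσθ n hn
      · exact reaches_enc_var (fun _ h => C.btrans_subset_Γsat (Or.inr h)) hgi
  | app g ts =>
      rw [hls] at hgi hSR
      exact reaches_subst_of_mem_SR C.btrans_subset_Γsat hSR hgi

lemma reaches_of_rewritesStar (hRL : Rg.RightLinear) {t t' : Term G arG} {q : Q}
    (ht : t.Ground) (h : RewritesStar Rg.rules t t') (h' : Reaches C.Γsat t' q) :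
    Reaches C.Γsat t q :=
  .of_rewritesStar (fun _ _ _ _ hlr hg hr => C.reaches_lhs_of_reaches_rhs hRL hlr hg hr)
    C.hground.choose_spec ht h h'

/-- Growth makes this work: a variable `n` shared by `l` and `r` is an argument `lᵢ` of `l`, so
the state `θ n` it needs in `r` is the state `qᵢ` of the new transition. -/
lemma exists_subst_of_satArg (hL : Rg.LeftLinear) (hGrow : Rg.Growing) {f : G}
    {ls : Fin (arG f) → Term G arG} {r : Term G arG} {θ : ℕ → Q} {q : Q}
    {Γ : Set (TARule G arG Q)} (hΓ : C.Γ0 ⊆ Γ) (hlr : (Term.app f ls, r) ∈ Rg.rules)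
    (hθ : ∀ n ∈ r.vars, θ n ∈ C.Qstates) (hr : ReachesT Γ θ r q)
    {ts : Fin (arG f) → Term G arG}
    (hts : ∀ i, Reaches C.Γ0 (ts i) (satArg C.enc θ r.vars (ls i))) :
    ∃ σ, Term.app f ts = (Term.app f ls).subst σ ∧ Reaches Γ (r.subst σ) q := by
  have hinst : ∀ i, ∃ τ, ts i = (ls i).subst τ := by
    intro i
    have hSR := lhs_arg_mem_SR hlr i
    cases hls : ls i with
    | var n => exact ⟨fun _ => ts i, rfl⟩
    | app g us =>
        have hB : Term.app g us ∈ BStateSet Rg := by simpa [hls] using stPattern_mem_BStateSet hSR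
        have hrun := (C.reaches_Γ0_split (hls ▸ hts i)).2 ⟨_, hB, rfl⟩
        refine exists_subst_of_reaches_enc hL C.henc (fun ρ hρ hout => ?_) hrun _ hB rfl
        rcases hρ with hM | ⟨g', rfl⟩
        · exact hM
        · obtain ⟨s, ⟨hs, hs0⟩, hs'⟩ := hout
          exact absurd (C.henc var_mem_BStateSet hs hs'.symm).symm hs0
  -- a variable of `r` that does not occur in `l` is sent to some term accepted in its state
  have hacc : ∀ n, ∃ u : Term G arG, n ∈ r.vars → u.Ground ∧ Reaches C.Γ0 u (θ n) := fun n =>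
    if hn : n ∈ r.vars then (C.exists_reaches_Γ0 (hθ n hn)).imp fun _ h _ => h
    else ⟨Term.var 0, fun h => absurd h hn⟩
  choose w hw using hacc
  obtain ⟨σ, hσ, hσw⟩ := (hL _ hlr).exists_subst_app hinst w
  refine ⟨σ, hσ, hr.reaches_subst fun n hn => ?_⟩
  by_cases hnl : n ∈ (Term.app f ls).vars
  · obtain ⟨i, hi⟩ := Term.mem_vars_app.1 hnl
    have hvar : ls i = Term.var n := hGrow _ hlr n hnl hn f ls rfl i hi
    have hσi : ts i = σ n := by simpa [hvar] using congrFun (eq_of_heq (Term.app.inj hσ).2) i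
    have := hts i
    simp only [hvar, satArg, if_pos hn] at this
    exact hσi ▸ this.mono hΓ
  · exact hσw n hnl ▸ ((hw n hn).2.mono hΓ)

lemma exists_rewritesStar_of_reaches_iterate (hL : Rg.LeftLinear) (hGrow : Rg.Growing) (n : ℕ)
    {t : Term G arG} {q : Q} (h : Reaches ((satStep Rg C.enc C.Qstates)^[n] C.Γ0) t q) :
    ∃ t', RewritesStar Rg.rules t t' ∧ Reaches C.Γ0 t' q := by
  induction n generalizing t q with
  | zero => exact ⟨t, .refl, h⟩
  | succ n ihn =>
      induction h with
      | @app f ts qs q _ hρ ih =>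
          choose ts' hts' hrun using ih
          have hΓ : C.Γ0 ⊆ (satStep Rg C.enc C.Qstates)^[n] C.Γ0 :=
            C.monotone_iterate_satStep (Nat.zero_le n)
          rw [Function.iterate_succ_apply'] at hρ
          rcases hρ with hold | ⟨f, ls, r, θ, q', hlr, hθ, hr, hρeq⟩
          · obtain ⟨t'', h₁, h₂⟩ := ihn (.app (fun i => (hrun i).mono hΓ) hold)
            exact ⟨t'', (rewritesStar_app hts').trans h₁, h₂⟩
          · obtain ⟨rfl, hρeq⟩ := Sigma.mk.inj_iff.1 hρeq
            obtain ⟨rfl, rfl⟩ := Prod.mk.inj (eq_of_heq hρeq)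
            obtain ⟨σ, hσ, hrσ⟩ := C.exists_subst_of_satArg hL hGrow hΓ hlr hθ hr hrun
            obtain ⟨t'', h₁, h₂⟩ := ihn hrσ
            refine ⟨t'', ((rewritesStar_app hts').tail ?_).trans h₁, h₂⟩
            exact hσ ▸ rewrites_root hlr σ

theorem exists_final_reaches_iff (hL : Rg.LeftLinear) (hRL : Rg.RightLinear)
    (hGrow : Rg.Growing) {v : Term G arG} (hv : v.Ground) :
    (∃ q ∈ C.A.final, Reaches C.Γsat v q) ↔ ∃ t ∈ T, RewritesStar Rg.rules v t := by
  simp only [Set.ext_iff.1 C.hT]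
  constructor
  · rintro ⟨q, hq, h⟩
    obtain ⟨n, hn⟩ := Reaches.exists_of_iUnion C.monotone_iterate_satStep h
    obtain ⟨t, hvt, ht⟩ := C.exists_rewritesStar_of_reaches_iterate hL hGrow n hn
    exact ⟨t, ⟨ht.ground, q, hq, (C.reaches_Γ0_split ht).1 (C.hfinal hq)⟩, hvt⟩
  · rintro ⟨t, ⟨-, q, hq, ht⟩, hvt⟩
    exact ⟨q, hq, C.reaches_of_rewritesStar hRL hv hvt
      (ht.mono (Set.subset_union_left.trans C.Γ0_subset_Γsat))⟩

end CSetup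

namespace TRS

variable {F : Type} {ar : F → ℕ} {R : TRS F ar}

lemma mem_liftC_rules {lr : Term (F ⊕ F) (arC ar) × Term (F ⊕ F) (arC ar)} :
    lr ∈ R.liftC.rules ↔ ∃ l r, (l, r) ∈ R.rules ∧ lr = (_root_.liftC l, _root_.liftC r) :=
  ⟨fun ⟨⟨l, r⟩, h, e⟩ => ⟨l, r, h, e.symm⟩, fun ⟨l, r, h, e⟩ => ⟨(l, r), h, e.symm⟩⟩

lemma liftC_mem_liftC_rules {l r : Term F ar} (h : (l, r) ∈ R.rules) :
    (_root_.liftC l, _root_.liftC r) ∈ R.liftC.rules :=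
  mem_liftC_rules.2 ⟨l, r, h, rfl⟩

lemma LeftLinear.liftC (h : R.LeftLinear) : R.liftC.LeftLinear := by
  intro lr hlr
  obtain ⟨l, r, hmem, rfl⟩ := mem_liftC_rules.1 hlr
  exact linear_liftC (h (l, r) hmem)

lemma RightLinear.liftC (h : R.RightLinear) : R.liftC.RightLinear := by
  intro lr hlr
  obtain ⟨l, r, hmem, rfl⟩ := mem_liftC_rules.1 hlr
  exact linear_liftC (h (l, r) hmem)

lemma Growing.liftC (h : R.Growing) : R.liftC.Growing := by
  intro lr hlr n hnl hnr g ts hts i hi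
  obtain ⟨l, r, hmem, rfl⟩ := mem_liftC_rules.1 hlr
  obtain ⟨f, ls, rfl⟩ := R.exists_eq_app_of_mem_rules hmem
  obtain ⟨rfl, hts⟩ := Term.app.inj hts
  obtain rfl := eq_of_heq hts
  replace hi : n ∈ (_root_.liftC (ls i)).vars := hi
  simp only [vars_liftC] at hnl hnr hi
  exact congrArg _root_.liftC (h _ hmem n hnl hnr f ls rfl i hi)

end TRS

namespace CrsSetup

variable {F : Type} [Fintype F] {ar : F → ℕ} {Q : Type} [Fintype Q] {R S : TRS F ar}
  (C : CrsSetup Q R S)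

lemma Γsat_subset_Γ' : C.Γsat ⊆ C.Γ' := fun _ h => Or.inl (Or.inl h)

lemma etrans_subset_Γ' : C.Etrans ⊆ C.Γ' := fun _ h => Or.inr h

lemma btrans_enc2_subset_Γ' : BTrans R.liftC C.enc2 ⊆ C.Γ' := by
  rintro ρ (h | ⟨f, rfl⟩)
  · exact Or.inl (Or.inr h)
  · rw [C.hx]
    exact C.Γsat_subset_Γ' (C.btrans_subset_Γsat (Or.inr ⟨f, rfl⟩))

lemma disjoint_enc2_Qstates :
    Disjoint (C.enc2 '' (BStateSet R.liftC \ {Term.var 0})) C.Qstates :=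
  Set.disjoint_iff_inter_eq_empty.2 C.hfresh2

lemma disjoint_statesOf_etrans :
    Disjoint (statesOf C.Etrans) (C.Qstates ∪ C.enc2 '' (BStateSet R.liftC \ {Term.var 0})) :=
  Set.disjoint_iff_inter_eq_empty.2 C.hEfresh

lemma bmatch_enc2_output {ρ : TARule (F ⊕ F) (arC ar) Q} (h : ρ ∈ BMatch R.liftC C.enc2) :
    ρ.2.2 ∈ C.enc2 '' (BStateSet R.liftC \ {Term.var 0}) := by
  obtain ⟨g, us, hSR, rfl⟩ := h
  exact ⟨_, ⟨stPattern_mem_BStateSet hSR, nofun⟩, rfl⟩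

lemma reaches_etrans_iff {u : Term (F ⊕ F) (arC ar)} {q : Q} (hq : q ∈ statesOf C.Etrans) :
    Reaches C.Γ' u q ↔ Reaches C.Etrans u q := by
  refine ⟨fun h => h.of_closed (fun ρ hρ hout => ?_) hq, (·.mono C.etrans_subset_Γ')⟩
  rcases hρ with (hsat | hM) | hE
  · exact absurd (Or.inl (C.statesOf_Γsat_subset ⟨ρ, hsat, Or.inl rfl⟩))
      (Set.disjoint_left.1 C.disjoint_statesOf_etrans hout)
  · exact absurd (Or.inr (C.bmatch_enc2_output hM))
      (Set.disjoint_left.1 C.disjoint_statesOf_etrans hout)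
  · exact ⟨hE, fun i => ⟨ρ, hE, Or.inr ⟨i, rfl⟩⟩⟩

lemma reaches_Γsat_iff {u : Term (F ⊕ F) (arC ar)} {q : Q} (hq : q ∈ C.Qstates) :
    Reaches C.Γ' u q ↔ Reaches C.Γsat u q := by
  refine ⟨fun h => h.of_closed (fun ρ hρ hout => ?_) hq, (·.mono C.Γsat_subset_Γ')⟩
  rcases hρ with (hsat | hM) | hE
  · exact ⟨hsat, fun i => C.statesOf_Γsat_subset ⟨ρ, hsat, Or.inr ⟨i, rfl⟩⟩⟩
  · exact absurd hout (Set.disjoint_left.1 C.disjoint_enc2_Qstates (C.bmatch_enc2_output hM))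
  · exact absurd (Or.inl hout) (Set.disjoint_left.1 C.disjoint_statesOf_etrans ⟨ρ, hE, Or.inl rfl⟩)

lemma exists_subst_of_reaches_enc2 {u : Term (F ⊕ F) (arC ar)} {s : Term (F ⊕ F) (arC ar)}
    (hL : R.LeftLinear) (hs : s ∈ BStateSet R.liftC) (h : Reaches C.Γ' u (C.enc2 s)) :
    ∃ σ, u = s.subst σ := by
  refine exists_subst_of_reaches_enc hL.liftC C.henc2 (fun ρ hρ hout => ?_) h s hs rfl
  rcases hρ with (hsat | hM) | hE
  · exact absurd (C.statesOf_Γsat_subset ⟨ρ, hsat, Or.inl rfl⟩)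
      (Set.disjoint_left.1 C.disjoint_enc2_Qstates hout)
  · exact hM
  · exact absurd (Or.inr hout) (Set.disjoint_left.1 C.disjoint_statesOf_etrans ⟨ρ, hE, Or.inl rfl⟩)

lemma lhsMatch_iff_isRedex (hL : R.LeftLinear) {f : F} {ts : Fin (ar f) → Term F ar}
    (hg : (Term.app f ts).Ground) :
    LhsMatch R.liftC C.enc2 (Sum.inl f) (fun i => dn C.Γ' (liftC (ts i))) ↔
      R.IsRedex (Term.app f ts) := by
  constructor
  · rintro ⟨ls, r', hmem, hst⟩
    obtain ⟨l, r, hlr, hlr'⟩ := TRS.mem_liftC_rules.1 hmem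
    obtain ⟨f₀, ls₀, rfl⟩ := R.exists_eq_app_of_mem_rules hlr
    obtain ⟨hf, hls⟩ := Term.app.inj (Prod.mk.inj hlr').1
    obtain rfl := Sum.inl_injective hf
    obtain rfl := eq_of_heq hls
    have hinst : ∀ i, ∃ σ, ts i = (ls₀ i).subst σ := fun i =>
      have hB := stPattern_mem_BStateSet (lhs_arg_mem_SR (TRS.liftC_mem_liftC_rules hlr) i)
      exists_subst_of_liftC_eq_subst (exists_subst_of_stPattern
        (C.exists_subst_of_reaches_enc2 hL hB (hst i))).choose_spec
    obtain ⟨σ, hσ, -⟩ := (hL _ hlr).exists_subst_app hinst fun _ => Term.var 0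
    exact ⟨_, hlr, σ, hσ⟩
  · rintro ⟨⟨l, r⟩, hlr, σ, heq⟩
    obtain ⟨f₀, ls₀, rfl⟩ := R.exists_eq_app_of_mem_rules hlr
    obtain ⟨rfl, hts⟩ := Term.app.inj heq
    obtain rfl := eq_of_heq hts
    have hlr' : (Term.app (Sum.inl f) fun i => liftC (ls₀ i), liftC r) ∈ R.liftC.rules :=
      TRS.liftC_mem_liftC_rules hlr
    refine ⟨_, _, hlr', fun i => ?_⟩
    have hgi := ground_liftC.2 (Term.ground_app.1 hg i)
    show Reaches C.Γ' (liftC ((ls₀ i).subst σ)) (C.enc2 (stPattern (liftC (ls₀ i))))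
    rw [liftC_subst] at hgi ⊢
    exact reaches_subst_of_mem_SR C.btrans_enc2_subset_Γ' (lhs_arg_mem_SR hlr' i) hgi

end CrsSetup

section MarkedRedexes

variable {F : Type} {ar : F → ℕ} {Q : Type}

/-- `s[(s|_p)°]_p↓` if `p` is a redex position of `s`, and `∅` otherwise. -/
def markedDn (R : TRS F ar) (Γ : Set (TARule (F ⊕ F) (arC ar) Q)) (s : Term F ar)
    (p : List ℕ) : Set Q :=
  { q | ∃ u v, s.subtermAt p = some u ∧ R.IsRedex u ∧
      (liftC s).replaceAt p (circTm u) = some v ∧ Reaches Γ v q }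

/-- The invariant satisfied by the second component `P` of the state `[S,P]` of `𝒟'(ℛ,𝒮)`
reached by `s`. -/
def IsMarkedSelection (R : TRS F ar) (Γ : Set (TARule (F ⊕ F) (arC ar) Q)) (s : Term F ar)
    (P : Set Q) : Prop :=
  P ⊆ ⋃ p, markedDn R Γ s p ∧ ∀ p, R.RedexPos s p → (P ∩ markedDn R Γ s p).Nonempty

variable {R : TRS F ar} {Γ : Set (TARule (F ⊕ F) (arC ar) Q)}

lemma redexPos_nil {s : Term F ar} : R.RedexPos s [] ↔ R.IsRedex s := by
  simp [TRS.RedexPos, Term.subtermAt_nil]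

lemma redexPos_cons {f : F} {ts : Fin (ar f) → Term F ar} {i : ℕ} {p : List ℕ} :
    R.RedexPos (Term.app f ts) (i :: p) ↔ ∃ h : i < ar f, R.RedexPos (ts ⟨i, h⟩) p := by
  simp only [TRS.RedexPos, Term.subtermAt_cons]
  exact ⟨fun ⟨u, ⟨h, hu⟩, hr⟩ => ⟨h, u, hu, hr⟩, fun ⟨h, u, hu, hr⟩ => ⟨u, ⟨h, hu⟩, hr⟩⟩

lemma markedDn_nil (s : Term F ar) :
    markedDn R Γ s [] = { q | R.IsRedex s ∧ q ∈ dn Γ (circTm s) } := by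
  ext q
  simp [markedDn, Term.subtermAt_nil, Term.replaceAt_nil, dn]

lemma mem_markedDn_cons {f : F} {ts : Fin (ar f) → Term F ar} {i : ℕ} {p : List ℕ} {q : Q} :
    q ∈ markedDn R Γ (Term.app f ts) (i :: p) ↔ ∃ h : i < ar f, q ∈ oneStep Γ (Sum.inl f)
      fun j => if j = ⟨i, h⟩ then markedDn R Γ (ts j) p else dn Γ (liftC (ts j)) := by
  constructor
  · rintro ⟨u, v, hsub, hred, hrep, hv⟩
    obtain ⟨h, hsub⟩ := Term.subtermAt_cons.1 hsub
    obtain ⟨_, v', hv', rfl⟩ := replaceAt_liftC_cons.1 hrep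
    obtain ⟨qs, hqs, hρ⟩ := reaches_app_iff.1 hv
    refine ⟨h, qs, fun j => ?_, hρ⟩
    rcases eq_or_ne j ⟨i, h⟩ with rfl | hj
    · simpa using ⟨u, v', hsub, hred, hv', by simpa using hqs ⟨i, h⟩⟩
    · simpa [hj, dn] using hqs j
  · rintro ⟨h, qs, hqs, hρ⟩
    have hi := hqs ⟨i, h⟩
    simp only [if_true] at hi
    obtain ⟨u, v', hsub, hred, hv', hreach⟩ := hi
    refine ⟨u, _, Term.subtermAt_cons.2 ⟨h, hsub⟩, hred,
      replaceAt_liftC_cons.2 ⟨h, v', hv', rfl⟩, .app (fun j => ?_) hρ⟩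
    rcases eq_or_ne j ⟨i, h⟩ with rfl | hj
    · simpa using hreach
    · simpa [hj, dn] using hqs j

lemma exists_isMarkedSelection_subset_iff {s : Term F ar} {X : Set Q} :
    (∃ P ⊆ X, IsMarkedSelection R Γ s P) ↔
      ∀ p, R.RedexPos s p → (markedDn R Γ s p ∩ X).Nonempty := by
  constructor
  · rintro ⟨P, hPX, -, hP⟩ p hp
    obtain ⟨q, hqP, hq⟩ := hP p hp
    exact ⟨q, hq, hPX hqP⟩
  · intro h
    refine ⟨X ∩ ⋃ p, markedDn R Γ s p, Set.inter_subset_left, Set.inter_subset_right,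
      fun p hp => ?_⟩
    obtain ⟨q, hq, hqX⟩ := h p hp
    exact ⟨q, ⟨hqX, Set.mem_iUnion.2 ⟨p, hq⟩⟩, hq⟩

/-- The set `Pᵢ` in the argument states `[tᵢ↓, Pᵢ]` of a transition of `𝒟'(ℛ,𝒮)` that leads to
`[f(t₁,…,tₙ)↓, P]`. -/
def argSelection (R : TRS F ar) (Γ : Set (TARule (F ⊕ F) (arC ar) Q)) {f : F}
    (ts : Fin (ar f) → Term F ar) (P : Set Q) (i : Fin (ar f)) : Set Q :=
  { r | r ∈ ⋃ p, markedDn R Γ (ts i) p ∧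
    ∃ q ∈ P, q ∈ oneStep Γ (Sum.inl f) fun j => if j = i then {r} else dn Γ (liftC (ts j)) }

lemma mem_argSelection {f : F} {ts : Fin (ar f) → Term F ar} {P : Set Q} {i : Fin (ar f)}
    {p : List ℕ} {q : Q} (hq : q ∈ P) {qs : Fin (ar f) → Q}
    (hqs : ∀ j, qs j ∈ if j = i then markedDn R Γ (ts j) p else dn Γ (liftC (ts j)))
    (hρ : (⟨Sum.inl f, qs, q⟩ : TARule (F ⊕ F) (arC ar) Q) ∈ Γ) :
    qs i ∈ argSelection R Γ ts P i ∧ q ∈ oneStep Γ (Sum.inl f)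
      fun j => if j = i then argSelection R Γ ts P j else dn Γ (liftC (ts j)) := by
  have hi : qs i ∈ markedDn R Γ (ts i) p := by simpa using hqs i
  have hPi : qs i ∈ argSelection R Γ ts P i :=
    ⟨Set.mem_iUnion.2 ⟨p, hi⟩, q, hq, qs, fun j => ?_, hρ⟩
  · refine ⟨hPi, qs, fun j => ?_, hρ⟩
    rcases eq_or_ne j i with rfl | hj
    · simpa using hPi
    · simpa [hj] using hqs j
  · rcases eq_or_ne j i with rfl | hj
    · simp
    · simpa [hj] using hqs j

lemma IsMarkedSelection.argSelection {f : F} {ts : Fin (ar f) → Term F ar} {P : Set Q}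
    (hP : IsMarkedSelection R Γ (Term.app f ts) P) (i : Fin (ar f)) :
    IsMarkedSelection R Γ (ts i) (argSelection R Γ ts P i) := by
  refine ⟨fun r hr => hr.1, fun p hp => ?_⟩
  obtain ⟨q, hqP, hq⟩ := hP.2 (i.1 :: p) (redexPos_cons.2 ⟨i.2, hp⟩)
  obtain ⟨h, qs, hqs, hρ⟩ := mem_markedDn_cons.1 hq
  have hi : qs i ∈ markedDn R Γ (ts i) p := by simpa using hqs i
  exact ⟨qs i, (mem_argSelection hqP hqs hρ).1, hi⟩

end MarkedRedexes

lemma DTransRS.output_fst {F : Type} {ar : F → ℕ} {Q : Type} {Rg : TRS (F ⊕ F) (arC ar)}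
    {Γ : Set (TARule (F ⊕ F) (arC ar) Q)} {enc2 : Term (F ⊕ F) (arC ar) → Q}
    {ρ : TARule F ar (Set Q × Set Q)} (h : ρ ∈ DTransRS Rg Γ enc2) :
    ρ.2.2.1 = oneStep Γ (Sum.inl ρ.1) fun i => (ρ.2.1 i).1 := by
  obtain ⟨f, SP, P1, P2, -, -, -, rfl⟩ := h
  rfl

namespace CrsSetup

variable {F : Type} [Fintype F] {ar : F → ℕ} {Q : Type} [Fintype Q] {R S : TRS F ar}
  (C : CrsSetup Q R S)

lemma isMarkedSelection_of_mem_dTransRS (hL : R.LeftLinear) {f : F}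
    {ts : Fin (ar f) → Term F ar} (hg : (Term.app f ts).Ground) {Ps : Fin (ar f) → Set Q}
    (hPs : ∀ i, IsMarkedSelection R C.Γ' (ts i) (Ps i)) {SP : Set Q × Set Q}
    (h : (⟨f, fun i => (dn C.Γ' (liftC (ts i)), Ps i), SP⟩ : TARule F ar (Set Q × Set Q)) ∈
      DTransRS R.liftC C.Γ' C.enc2) :
    IsMarkedSelection R C.Γ' (Term.app f ts) SP.2 := by
  obtain ⟨f', SP', P1, P2, hP1, hcover, hP2, heq⟩ := h
  obtain ⟨rfl, heq⟩ := Sigma.mk.inj_iff.1 heq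
  obtain ⟨rfl, rfl⟩ := Prod.mk.inj (eq_of_heq heq)
  have hredex := C.lhsMatch_iff_isRedex hL hg
  refine ⟨Set.union_subset (fun q hq => ?_) (fun q hq => ?_), fun p hp => ?_⟩
  · obtain ⟨i, qs, hqs, hρ⟩ := Set.mem_iUnion.1 (hP1 hq)
    have hi : qs i ∈ Ps i := by simpa using hqs i
    obtain ⟨p, hp⟩ := Set.mem_iUnion.1 ((hPs i).1 hi)
    refine Set.mem_iUnion.2 ⟨i.1 :: p, mem_markedDn_cons.2 ⟨i.2, qs, fun j => ?_, hρ⟩⟩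
    rcases eq_or_ne j i with rfl | hj
    · simpa using hp
    · simpa [hj] using hqs j
  · rcases hP2 with ⟨hM, -, hsub⟩ | ⟨-, rfl⟩
    · exact Set.mem_iUnion.2 ⟨[], by rw [markedDn_nil]; exact ⟨hredex.1 hM, dn_app ▸ hsub hq⟩⟩
    · exact absurd hq (Set.notMem_empty q)
  · cases p with
    | nil =>
        have hM := hredex.2 (redexPos_nil.1 hp)
        rcases hP2 with ⟨-, ⟨q, hq⟩, hsub⟩ | ⟨hnM, -⟩
        · rw [markedDn_nil]
          exact ⟨q, Or.inr hq, hredex.1 hM, dn_app ▸ hsub hq⟩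
        · exact absurd hM hnM
    | cons i p =>
        obtain ⟨h, hp⟩ := redexPos_cons.1 hp
        obtain ⟨r, hrP, hr⟩ := (hPs ⟨i, h⟩).2 p hp
        obtain ⟨q, hqP, qs, hqs, hρ⟩ := hcover ⟨i, h⟩ r hrP
        refine ⟨q, Or.inl hqP, mem_markedDn_cons.2 ⟨h, qs, fun j => ?_, hρ⟩⟩
        rcases eq_or_ne j ⟨i, h⟩ with rfl | hj
        · simpa [show qs ⟨i, h⟩ = r by simpa using hqs ⟨i, h⟩] using hr
        · simpa [hj] using hqs j

lemma exists_mem_dTransRS_of_isMarkedSelection (hL : R.LeftLinear) {f : F}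
    {ts : Fin (ar f) → Term F ar} (hg : (Term.app f ts).Ground) {P : Set Q}
    (hP : IsMarkedSelection R C.Γ' (Term.app f ts) P) :
    ∃ Ps : Fin (ar f) → Set Q, (∀ i, IsMarkedSelection R C.Γ' (ts i) (Ps i)) ∧
      (⟨f, fun i => (dn C.Γ' (liftC (ts i)), Ps i), (dn C.Γ' (liftC (Term.app f ts)), P)⟩ :
        TARule F ar (Set Q × Set Q)) ∈ DTransRS R.liftC C.Γ' C.enc2 := by
  classical
  set Ss : Fin (ar f) → Set Q := fun i => dn C.Γ' (liftC (ts i))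
  set Ps := argSelection R C.Γ' ts P
  set P1 := P ∩ ⋃ i, oneStep C.Γ' (Sum.inl f) fun j => if j = i then Ps j else Ss j
  set P2 := if LhsMatch R.liftC C.enc2 (Sum.inl f) Ss then P ∩ dn C.Γ' (circTm (Term.app f ts))
    else ∅
  have hredex : LhsMatch R.liftC C.enc2 (Sum.inl f) Ss ↔ _ := C.lhsMatch_iff_isRedex hL hg
  have hP12 : P = P1 ∪ P2 := by
    refine subset_antisymm (fun q hq => ?_) (Set.union_subset Set.inter_subset_left ?_)
    · obtain ⟨p, hp⟩ := Set.mem_iUnion.1 (hP.1 hq)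
      cases p with
      | nil =>
          rw [markedDn_nil] at hp
          exact Or.inr (by simp only [P2, if_pos (hredex.2 hp.1)]; exact ⟨hq, hp.2⟩)
      | cons i p =>
          obtain ⟨h, qs, hqs, hρ⟩ := mem_markedDn_cons.1 hp
          exact Or.inl ⟨hq, Set.mem_iUnion.2 ⟨_, (mem_argSelection hq hqs hρ).2⟩⟩
    · unfold P2
      split_ifs
      exacts [Set.inter_subset_left, Set.empty_subset _]
  refine ⟨Ps, hP.argSelection, f, fun i => (Ss i, Ps i), P1, P2, Set.inter_subset_right,
    fun i r hr => ?_, ?_, ?_⟩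
  · obtain ⟨q, hqP, hq⟩ := hr.2
    refine ⟨q, ⟨hqP, Set.mem_iUnion.2 ⟨i, oneStep_mono (fun j => ?_) hq⟩⟩, hq⟩
    rcases eq_or_ne j i with rfl | hj
    · simpa using hr
    · simp [hj, Ss]
  · by_cases hM : LhsMatch R.liftC C.enc2 (Sum.inl f) Ss
    · obtain ⟨q, hqP, hq⟩ := hP.2 [] (redexPos_nil.2 (hredex.1 hM))
      rw [markedDn_nil] at hq
      refine Or.inl ⟨hM, ⟨q, by simp only [P2, if_pos hM]; exact ⟨hqP, hq.2⟩⟩, fun q hq => ?_⟩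
      simp only [P2, if_pos hM] at hq
      exact dn_app ▸ hq.2
    · exact Or.inr ⟨hM, if_neg hM⟩
  · rw [← hP12, liftC_app, dn_app]

theorem reaches_dTransRS_iff (hL : R.LeftLinear) {s : Term F ar} (hs : s.Ground)
    (SP : Set Q × Set Q) :
    Reaches (DTransRS R.liftC C.Γ' C.enc2) s SP ↔
      SP.1 = dn C.Γ' (liftC s) ∧ IsMarkedSelection R C.Γ' s SP.2 := by
  induction s generalizing SP with
  | var n => exact absurd hs (Term.not_ground_var n)
  | app f ts ih =>
      have ih' := fun i => ih i (Term.ground_app.1 hs i)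
      constructor
      · intro h
        obtain ⟨SPs, hargs, hρ⟩ := reaches_app_iff.1 h
        have hSPs : SPs = fun i => (dn C.Γ' (liftC (ts i)), (SPs i).2) :=
          funext fun i => Prod.ext ((ih' i _).1 (hargs i)).1 rfl
        refine ⟨?_, C.isMarkedSelection_of_mem_dTransRS hL hs
          (fun i => ((ih' i _).1 (hargs i)).2) (hSPs ▸ hρ)⟩
        rw [DTransRS.output_fst hρ, hSPs]
        exact dn_app.symm
      · obtain ⟨S, P⟩ := SP
        rintro ⟨rfl, hP⟩
        obtain ⟨Ps, hPs, hρ⟩ := C.exists_mem_dTransRS_of_isMarkedSelection hL hs hP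
        exact .app (fun i => (ih' i _).2 ⟨rfl, hPs i⟩) hρ

lemma mem_lang_dAutomatonRS_iff (hL : R.LeftLinear) {s : Term F ar} (hs : s.Ground) :
    s ∈ Lang (DAutomatonRS R.liftC C.Γ' C.enc2 C.Qf' C.A.final) ↔
      (dn C.Γ' (liftC s) ∩ C.Qf').Nonempty ∧ ∃ P ⊆ C.A.final, IsMarkedSelection R C.Γ' s P := by
  simp only [Lang, DAutomatonRS, Set.mem_ofPred_eq, C.reaches_dTransRS_iff hL hs, hs, true_and]
  constructor
  · rintro ⟨⟨S, P⟩, ⟨hS, hP⟩, rfl, hsel⟩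
    exact ⟨hS, P, hP, hsel⟩
  · rintro ⟨hS, P, hP, hsel⟩
    exact ⟨(_, P), ⟨hS, hP⟩, rfl, hsel⟩

lemma dn_inter_Qf'_nonempty_iff {s : Term F ar} (hs : s.Ground) :
    (dn C.Γ' (liftC s) ∩ C.Qf').Nonempty ↔ ¬ S.RootStable s := by
  constructor
  · rintro ⟨q, hq, hqf⟩
    have hE := (C.reaches_etrans_iff (C.hQf' hqf)).1 hq
    obtain ⟨s', hs', -, hnrs⟩ := (C.hE (liftC s)).1 ⟨ground_liftC.2 hs, q, hqf, hE⟩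
    exact liftC_injective hs' ▸ hnrs
  · intro hnrs
    obtain ⟨-, q, hqf, hE⟩ := (C.hE (liftC s)).2 ⟨s, rfl, hs, hnrs⟩
    exact ⟨q, hE.mono C.etrans_subset_Γ', hqf⟩

lemma markedDn_inter_final_nonempty_iff (hR : R.IsLinear) (hRgrow : R.Growing)
    {s u : Term F ar} (hs : s.Ground) {p : List ℕ} (hu : s.subtermAt p = some u)
    (hred : R.IsRedex u) :
    (markedDn R C.Γ' s p ∩ C.A.final).Nonempty ↔
      ∃ v, (liftC s).replaceAt p (circTm u) = some v ∧
        ∃ t ∈ TRS.RSset S.circ, RewritesStar R.liftC.rules v t := by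
  have hvg : ∀ {v}, (liftC s).replaceAt p (circTm u) = some v → v.Ground := fun hv =>
    (ground_liftC.2 hs).replaceAt (ground_circTm (hs.subtermAt hu)) hv
  have hfinal : ∀ {v}, v.Ground → ((∃ q ∈ C.A.final, Reaches C.Γ' v q) ↔
      ∃ t ∈ TRS.RSset S.circ, RewritesStar R.liftC.rules v t) := fun hv => by
    rw [← C.exists_final_reaches_iff hR.1.liftC hR.2.liftC hRgrow.liftC hv]
    exact exists_congr fun q => and_congr_right fun hq =>
      C.reaches_Γsat_iff (Or.inl (C.hfinal hq))
  constructor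
  · rintro ⟨q, ⟨u', v, hu', -, hv, hq⟩, hqf⟩
    obtain rfl := Option.some_inj.1 (hu'.symm.trans hu)
    exact ⟨v, hv, (hfinal (hvg hv)).1 ⟨q, hqf, hq⟩⟩
  · rintro ⟨v, hv, hvt⟩
    obtain ⟨q, hqf, hq⟩ := (hfinal (hvg hv)).2 hvt
    exact ⟨q, ⟨u, v, hu, hred, hv, hq⟩, hqf⟩

end CrsSetup

theorem statement19_general {F : Type} [Fintype F] {ar : F → ℕ} {Q : Type} [Fintype Q]
    (R S : TRS F ar) (hRlin : R.IsLinear) (hRgrow : R.Growing)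
    (C : CrsSetup Q R S)
    (s : Term F ar) (hs : s.Ground) :
    s ∈ Lang (DAutomatonRS R.liftC C.Γ' C.enc2 C.Qf' C.A.final) ↔
      (¬ S.RootStable s ∧ ∀ p u, s.subtermAt p = some u → R.IsRedex u →
        ∃ v, (liftC s).replaceAt p (circTm u) = some v ∧
          ∃ t ∈ TRS.RSset S.circ, RewritesStar R.liftC.rules v t) := by
  rw [C.mem_lang_dAutomatonRS_iff hRlin.1 hs, C.dn_inter_Qf'_nonempty_iff hs,
    exists_isMarkedSelection_subset_iff]
  refine and_congr_right fun _ => ⟨fun h p u hu hred => ?_, fun h p ⟨u, hu, hred⟩ => ?_⟩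
  · exact (C.markedDn_inter_final_nonempty_iff hRlin hRgrow hs hu hred).1 (h p ⟨u, hu, hred⟩)
  · exact (C.markedDn_inter_final_nonempty_iff hRlin hRgrow hs hu hred).2 (h p u hu hred)

/-- Let `ℛ` and `𝒮` be linear growing TRSs over `𝓕` and `𝒟'(ℛ,𝒮)`
the powerset-pair automaton built from `𝒞'_{RS_{𝒮°}}(ℛ)`.  For every `s ∈ 𝒯(𝓕)`:
`s ∈ L(𝒟'(ℛ,𝒮))` iff `s` is not root-stable with respect to `𝒮` and
`s[(s|_p)°]_p ∈ (→_ℛ*)[RS_{𝒮°}]` for every redex position `p` of `s`. -/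
theorem statement19 {F : Type} [Fintype F] {ar : F → ℕ} {Q : Type} [Fintype Q]
    (R S : TRS F ar) (hRlin : R.IsLinear) (hRgrow : R.Growing)
    (hSlin : S.IsLinear) (hSgrow : S.Growing)
    (C : CrsSetup Q R S)
    (s : Term F ar) (hs : s.Ground) :
    s ∈ Lang (DAutomatonRS R.liftC C.Γ' C.enc2 C.Qf' C.A.final) ↔
      (¬ S.RootStable s ∧ ∀ p u, s.subtermAt p = some u → R.IsRedex u →
        ∃ v, (liftC s).replaceAt p (circTm u) = some v ∧
          ∃ t ∈ TRS.RSset S.circ, RewritesStar R.liftC.rules v t) :=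
  statement19_general R S hRlin hRgrow C s hs
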